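/- arXiv:1205.1358 — 7 statements merged into one kernel-verified Lean document; each statement's English description precedes it below -/
import Mathlib

section
/- If an FO sentence φ is preserved under substructures modulo a finite core, then there exists a natural number B (depending only on φ) such that every model of φ has a core of size at most B; that is, PSC_f = ⋃_{B≥0} PSC(B). -/
/-!
Suppose no bound works, and pick for each `B` a model `M B` of `φ` without a core of size `≤ B`.
By Łoś's theorem the ultraproduct `U` of the `M B` over a nonprincipal ultrafilter on `ℕ` models
`φ`, so it has a finite core `C`. Fix representatives of the elements of `C`. For all large `B`
there is a substructure `S B` of `M B` containing the `B`-th coordinates of these representatives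
in which `φ` fails. The ultraproduct of the `S B` embeds into `U` with image a substructure
containing `C`, and by Łoś's theorem again this substructure does not satisfy `φ`.
-/

open FirstOrder Language

universe u v

namespace Stmt

variable {L : FirstOrder.Language.{u, v}}

/-- Universally quantify the last `k` bound variables of a bounded formula. -/
def allsK {n : ℕ} : (k : ℕ) → L.BoundedFormula Empty (n + k) → L.BoundedFormula Empty n
  | 0, φ => φ
  | k + 1, φ => allsK k φ.all

/-- Existentially quantify the last `k` bound variables of a bounded formula. -/
def exsK {n : ℕ} : (k : ℕ) → L.BoundedFormula Empty (n + k) → L.BoundedFormula Empty n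
  | 0, φ => φ
  | k + 1, φ => exsK k φ.ex

/-- The Σ⁰₂ sentence `∃x₁…x_B ∀y₁…y_n β` (for `β` quantifier-free). -/
def sigma2 (B n : ℕ) (β : L.BoundedFormula Empty (B + n)) : L.Sentence :=
  (allsK n β).exs

/-- The Π⁰₂ sentence `∀x₁…x_k ∃y₁…y_m β` (for `β` quantifier-free). -/
def pi2 (k m : ℕ) (β : L.BoundedFormula Empty (k + m)) : L.Sentence :=
  (exsK m β).alls

/-- `C` is a core of the structure `M` w.r.t. `φ`: every (nonempty) substructure of `M`
whose universe contains `C` satisfies `φ`. -/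
def IsCore (φ : L.Sentence) (M : Type max u v) [L.Structure M] (C : Set M) : Prop :=
  ∀ N : L.Substructure M, C ⊆ (N : Set M) → Nonempty N → ↥N ⊨ φ

/-- `φ` is preserved under substructures modulo a finite core: every model of `φ`
has a finite core w.r.t. `φ`. -/
def PSCf (φ : L.Sentence) : Prop :=
  ∀ (M : Type max u v) [L.Structure M] [Nonempty M],
    M ⊨ φ → ∃ C : Set M, C.Finite ∧ IsCore φ M C

/-- `φ ∈ PSC(B)`: every model of `φ` has a core of size at most `B` w.r.t. `φ`. -/
def PSC (φ : L.Sentence) (B : ℕ) : Prop :=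
  ∀ (M : Type max u v) [L.Structure M] [Nonempty M],
    M ⊨ φ → ∃ C : Finset M, C.card ≤ B ∧ IsCore φ M ↑C

/-- Logical equivalence of sentences: they hold in exactly the same (nonempty) structures. -/
def Equiv (φ ψ : L.Sentence) : Prop :=
  ∀ (M : Type max u v) [L.Structure M] [Nonempty M], M ⊨ φ ↔ M ⊨ ψ

end Stmt

open Structure Filter

namespace FirstOrder.Language.Ultraproduct

variable {L : Language} {α : Type*} {u : Ultrafilter α} {M N : α → Type*}
  [∀ a, L.Structure (M a)] [∀ a, L.Structure (N a)]

theorem exists_eq_coe_comp {n : ℕ} (x : Fin n → (u : Filter α).Product M) :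
    ∃ y : Fin n → ∀ a, M a, x = fun i => (y i : (u : Filter α).Product M) :=
  ⟨fun i => Quotient.out (x i), funext fun _ => (Quotient.out_eq _).symm⟩

theorem relMap_cast {n : ℕ} (r : L.Relations n) (x : Fin n → ∀ a, M a) :
    RelMap r (fun i => (x i : (u : Filter α).Product M)) ↔
      ∀ᶠ a in (u : Filter α), RelMap r fun i => x i a :=
  relMap_quotient_mk' _ r x

noncomputable def embeddingMap (f : ∀ a, N a ↪[L] M a) :
    (u : Filter α).Product N ↪[L] (u : Filter α).Product M where
  toFun := Quotient.map (fun x a => f a (x a)) fun _ _ h => h.mono fun a ha => congrArg (f a) ha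
  inj' := by
    rintro ⟨x⟩ ⟨y⟩ h
    exact Quotient.sound ((Quotient.exact h).mono fun a ha => (f a).injective ha)
  map_fun' := by
    intro n F x
    obtain ⟨x, rfl⟩ := exists_eq_coe_comp x
    refine (congrArg _ (funMap_cast F x)).trans ?_
    refine Eq.trans ?_ (funMap_cast F fun i a => f a (x i a)).symm
    exact congrArg _ (funext fun a => (f a).map_fun F _)
  map_rel' := by
    intro n r x
    obtain ⟨x, rfl⟩ := exists_eq_coe_comp x
    refine (relMap_cast r fun i a => f a (x i a)).trans (Iff.trans ?_ (relMap_cast r x).symm)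
    exact eventually_congr (.of_forall fun a => (f a).map_rel r _)

theorem coe_mem_range_embeddingMap [∀ a, Nonempty (N a)] (f : ∀ a, N a ↪[L] M a)
    {x : ∀ a, M a} (hx : ∀ᶠ a in (u : Filter α), x a ∈ Set.range (f a)) :
    (x : (u : Filter α).Product M) ∈ (embeddingMap f).toHom.range :=
  Hom.mem_range.2 ⟨fun a => Function.invFun (f a) (x a),
    Quotient.sound (hx.mono fun _ ha => Function.invFun_eq ha)⟩

theorem realize_sentence_range_embeddingMap [∀ a, Nonempty (N a)] (f : ∀ a, N a ↪[L] M a)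
    (φ : L.Sentence) :
    (embeddingMap (u := u) f).toHom.range ⊨ φ ↔ ∀ᶠ a in (u : Filter α), N a ⊨ φ :=
  (StrongHomClass.realize_sentence (embeddingMap f).equivRange φ).symm.trans
    (sentence_realize φ)

end FirstOrder.Language.Ultraproduct

namespace Stmt

variable {L : FirstOrder.Language.{u, v}}

theorem not_isCore_iff {φ : L.Sentence} {M : Type max u v} [L.Structure M] {C : Set M} :
    ¬ IsCore φ M C ↔ ∃ S : L.Substructure M, C ⊆ S ∧ Nonempty S ∧ ¬ S ⊨ φ := by
  simp only [IsCore, not_forall, exists_prop]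

theorem not_isCore_ultraproduct {φ : L.Sentence} {M : ℕ → Type max u v}
    [∀ B, L.Structure (M B)] [∀ B, Nonempty (M B)]
    (hM : ∀ B (D : Finset (M B)), D.card ≤ B → ¬ IsCore φ (M B) D)
    {C : Set ((hyperfilter ℕ : Filter ℕ).Product M)} (hC : C.Finite) :
    ¬ IsCore φ ((hyperfilter ℕ : Filter ℕ).Product M) C := by
  classical
  obtain ⟨rep, hrep⟩ : ∃ rep : (hyperfilter ℕ : Filter ℕ).Product M → ∀ B, M B,
      ∀ c, (rep c : (hyperfilter ℕ : Filter ℕ).Product M) = c :=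
    ⟨Quotient.out, Quotient.out_eq⟩
  let D (B : ℕ) : Finset (M B) := hC.toFinset.image fun c => rep c B
  have hS (B : ℕ) : ∃ S : L.Substructure (M B), Nonempty S ∧
      (hC.toFinset.card ≤ B → ↑(D B) ⊆ (S : Set (M B)) ∧ ¬ S ⊨ φ) := by
    by_cases hB : hC.toFinset.card ≤ B
    · obtain ⟨S, hDS, hSne, hSφ⟩ := not_isCore_iff.1 (hM B (D B) (Finset.card_image_le.trans hB))
      exact ⟨S, hSne, fun _ => ⟨hDS, hSφ⟩⟩
    · exact ⟨⊤, ⟨⟨Classical.arbitrary _, Substructure.mem_top _⟩⟩, fun h => absurd h hB⟩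
  choose S _ hS using hS
  have hlarge : ∀ᶠ B in (hyperfilter ℕ : Filter ℕ), hC.toFinset.card ≤ B :=
    Nat.hyperfilter_le_atTop (eventually_ge_atTop _)
  intro hcore
  refine (Ultraproduct.realize_sentence_range_embeddingMap (fun B => (S B).subtype) φ).not.2
    (fun hSφ => ?_) (hcore _ ?_ ?_)
  · obtain ⟨B, hBφ, hB⟩ := (hSφ.and hlarge).exists
    exact (hS B hB).2 hBφ
  · intro c hc
    rw [← hrep c]
    refine Ultraproduct.coe_mem_range_embeddingMap _ (hlarge.mono fun B hB => ?_)
    exact ⟨⟨rep c B, (hS B hB).1 (Finset.mem_image_of_mem _ (hC.mem_toFinset.2 hc))⟩, rfl⟩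
  · exact ⟨⟨_, Hom.mem_range_self _ (Classical.arbitrary _)⟩⟩

theorem statement1_general (φ : L.Sentence) (h : PSCf φ) :
    ∃ B : ℕ, PSC φ B := by
  by_contra! hφ
  simp only [PSC, not_forall, not_exists, not_and, exists_prop] at hφ
  choose M _ _ hMφ hM using hφ
  obtain ⟨C, hC, hcore⟩ := h _ ((Ultraproduct.sentence_realize φ).2 (.of_forall hMφ))
  exact not_isCore_ultraproduct hM hC hcore

/-- If an FO sentence `φ` is preserved under substructures modulo a finite core, then there is
a natural number `B` (depending only on `φ`) such that every model of `φ` has a core of size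
at most `B`; that is, `PSC_f = ⋃_{B ≥ 0} PSC(B)`. -/
theorem statement1 [Finite L.Symbols] (φ : L.Sentence) (h : PSCf φ) :
    ∃ B : ℕ, PSC φ B :=
  statement1_general φ h

end Stmt
end

section
/- Let τ be a vocabulary consisting of k unary predicate symbols and let φ be an FO(τ) sentence of quantifier rank r with φ ∈ PSC(B). Then, with n = r·2^k, φ is logically equivalent to the condition: there exist elements a₁,…,a_B such that for all elements b₁,…,b_n, the substructure induced on {a₁,…,a_B,b₁,…,b_n} satisfies φ. -/
/-!
Over `k` unary predicates, two elements of the same color (the set of predicates they satisfy)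
are swapped by an automorphism fixing everything else, and there are `2 ^ k` colors. Hence a
substructure `N ≤ M` containing, of each color, all elements or at least `m` of them satisfies
the same sentences of quantifier rank `≤ m` as `M`: in the Ehrenfeucht–Fraïssé induction, a
witness `b ∉ N` for a formula with fewer than `m` parameters is swapped with an element of `N`
of the same color avoiding the parameters.

Choosing `b` to enumerate `r` (or all) elements of each color makes the closure of
`range a ∪ range b` such a substructure for `m = r`, which gives `⇐`. For `⇒`, `range a` is
chosen to contain a core of size `≤ B`; the closure is nonempty when `r > 0`, and when `r = 0`
the sentence `φ` is quantifier-free and transfers to every substructure.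
-/

open FirstOrder Language

universe u v

namespace Stmt

variable {L : FirstOrder.Language.{u, v}}

/-- The quantifier rank of a bounded formula: the maximum depth of nesting of quantifiers. -/
def qr {α : Type*} : ∀ {n : ℕ}, L.BoundedFormula α n → ℕ
  | _, .falsum => 0
  | _, .equal _ _ => 0
  | _, .rel _ _ => 0
  | _, .imp f g => max (qr f) (qr g)
  | _, .all f => qr f + 1

/-- The vocabulary consisting of `k` unary predicate symbols (and nothing else). -/
def unaryLang (k : ℕ) : FirstOrder.Language :=
  ⟨fun _ => Empty, fun n => if n = 1 then Fin k else Empty⟩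

/-- `φ` is preserved under substructures: every (nonempty) substructure of every model of `φ`
satisfies `φ`. -/
def PS (φ : L.Sentence) : Prop :=
  ∀ (M : Type max u v) [L.Structure M] [Nonempty M], M ⊨ φ →
    ∀ N : L.Substructure M, (N : Set M).Nonempty → ↥N ⊨ φ

theorem _root_.FirstOrder.Language.BoundedFormula.IsQF.realize_substructure_iff {L : Language}
    {M : Type*} [L.Structure M] {N : L.Substructure M} {n : ℕ} {ψ : L.BoundedFormula Empty n}
    (hψ : ψ.IsQF) (xs : Fin n → N) :
    ψ.Realize default (Subtype.val ∘ xs) ↔ ψ.Realize default xs := by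
  rw [← hψ.realize_embedding N.subtype, Subsingleton.elim (N.subtype ∘ default) default]
  rfl

theorem exists_fin_subset_range_of_encard_le {M : Type*} [Nonempty M] {s : Set M} {B : ℕ}
    (hs : s.encard ≤ B) : ∃ a : Fin B → M, s ⊆ Set.range a := by
  obtain ⟨n, f, hf, rfl⟩ := (Set.finite_of_encard_le_coe hs).fin_param
  have hn : n ≤ B := by simpa using hf.encard_range.trans hs
  refine ⟨Function.extend (Fin.castLE hn) f fun _ => Classical.arbitrary M, ?_⟩
  rintro _ ⟨j, rfl⟩
  exact ⟨Fin.castLE hn j, (Fin.castLE_injective hn).extend_apply _ _ _⟩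

section UnaryStructures

variable {k : ℕ}

def unaryRel (i : Fin k) : (unaryLang k).Relations 1 := i

instance unaryLang.isEmpty_functions (n : ℕ) : IsEmpty ((unaryLang k).Functions n) :=
  inferInstanceAs (IsEmpty Empty)

lemma unaryLang.isEmpty_relations {n : ℕ} (hn : n ≠ 1) :
    IsEmpty ((unaryLang k).Relations n) := by
  simp only [unaryLang, hn, if_false]
  infer_instance

variable {M : Type*} [(unaryLang k).Structure M]

variable (k) in
def colorOf (x : M) : Set (Fin k) :=
  {i | Structure.RelMap (unaryRel i) fun _ => x}

def equivOfColorOf (e : M ≃ M) (he : ∀ x, colorOf k (e x) = colorOf k x) :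
    M ≃[unaryLang k] M where
  toEquiv := e
  map_fun' f := isEmptyElim f
  map_rel' {n} R xs := by
    by_cases hn : n = 1
    · subst hn
      have hxs : xs = fun _ => xs 0 := funext fun j => congrArg xs (Fin.fin_one_eq_zero j)
      rw [hxs]
      exact Set.ext_iff.mp (he (xs 0)) R
    · have := unaryLang.isEmpty_relations (k := k) hn
      exact isEmptyElim R

theorem realize_snoc_iff_of_colorOf_eq {n : ℕ} (θ : (unaryLang k).BoundedFormula Empty (n + 1))
    {xs : Fin n → M} {b b' : M} (hc : colorOf k b = colorOf k b')
    (hb : b ∉ Set.range xs) (hb' : b' ∉ Set.range xs) :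
    θ.Realize default (Fin.snoc xs b) ↔ θ.Realize default (Fin.snoc xs b') := by
  classical
  let σ := equivOfColorOf (k := k) (Equiv.swap b b') fun x => by
    rcases eq_or_ne x b with rfl | hxb
    · simp [hc]
    rcases eq_or_ne x b' with rfl | hxb'
    · simp [hc]
    · rw [Equiv.swap_apply_of_ne_of_ne hxb hxb']
  have hσ : σ ∘ Fin.snoc xs b = Fin.snoc xs b' := by
    have hxs : σ ∘ xs = xs := funext fun j =>
      Equiv.swap_apply_of_ne_of_ne (fun h => hb ⟨j, h⟩) (fun h => hb' ⟨j, h⟩)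
    rw [Fin.comp_snoc, hxs]
    exact congrArg _ (Equiv.swap_apply_left b b')
  rw [← StrongHomClass.realize_boundedFormula σ θ, hσ,
    Subsingleton.elim (σ ∘ default) default]

variable (k) in
/-- `S` contains, of each color, all elements or at least `m` of them. -/
def IsColorSaturated (m : ℕ) (S : Set M) : Prop :=
  ∀ c : Set (Fin k),
    min (m : ℕ∞) {x : M | colorOf k x = c}.encard ≤ (S ∩ {x | colorOf k x = c}).encard

theorem isColorSaturated_zero (S : Set M) : IsColorSaturated k 0 S := fun c => by
  simp

theorem IsColorSaturated.mono {m : ℕ} {S T : Set M} (hS : IsColorSaturated k m S)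
    (hST : S ⊆ T) : IsColorSaturated k m T := fun c =>
  (hS c).trans (Set.encard_mono (Set.inter_subset_inter_left _ hST))

theorem exists_isColorSaturated_range [Nonempty M] (m : ℕ) :
    ∃ b : Fin (m * 2 ^ k) → M, IsColorSaturated k m (Set.range b) := by
  choose t htc ht using fun c : Set (Fin k) =>
    Set.exists_subset_encard_eq (min_le_right (m : ℕ∞) {x : M | colorOf k x = c}.encard)
  have hcard : (⋃ c, t c).encard ≤ (m * 2 ^ k : ℕ) := calc
    (⋃ c, t c).encard ≤ ∑ c, (t c).encard := Set.encard_iUnion_le_of_fintype t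
    _ ≤ ∑ _ : Set (Fin k), (m : ℕ∞) :=
      Finset.sum_le_sum fun c _ => (ht c).trans_le (min_le_left _ _)
    _ = (m * 2 ^ k : ℕ) := by simp [Fintype.card_set, mul_comm]
  obtain ⟨b, hb⟩ := exists_fin_subset_range_of_encard_le hcard
  exact ⟨b, fun c => (ht c).symm.trans_le <| Set.encard_mono fun x hx =>
    ⟨hb (Set.mem_iUnion_of_mem c hx), htc c hx⟩⟩

theorem IsColorSaturated.exists_colorOf_eq {m : ℕ} {S F : Set M} (hS : IsColorSaturated k m S)
    {b : M} (hb : b ∉ S) (hF : F.encard < m) :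
    ∃ b' ∈ S, colorOf k b = colorOf k b' ∧ b' ∉ F := by
  set T := {x : M | colorOf k x = colorOf k b}
  have hm : (m : ℕ∞) ≤ (S ∩ T).encard := by
    by_contra! hlt
    have hT : T.encard ≤ (S ∩ T).encard :=
      (min_le_iff.mp (hS (colorOf k b))).resolve_left hlt.not_ge
    have hTfin : T.Finite := Set.finite_of_encard_le_coe (hT.trans hlt.le)
    have hST : S ∩ T = T := hTfin.eq_of_subset_of_encard_le' Set.inter_subset_right hT
    exact hb (hST.symm ▸ rfl : b ∈ S ∩ T).1
  obtain ⟨b', ⟨hb'S, hb'T⟩, hb'F⟩ :=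
    Set.not_subset.mp fun h => (Set.encard_mono h).not_gt (hF.trans_le hm)
  exact ⟨b', hb'S, hb'T.symm, hb'F⟩

theorem IsColorSaturated.realize_boundedFormula_iff {m : ℕ} {N : (unaryLang k).Substructure M}
    (hN : IsColorSaturated k m (N : Set M)) {n : ℕ} (ψ : (unaryLang k).BoundedFormula Empty n)
    (hψ : qr ψ + n ≤ m) (xs : Fin n → N) :
    ψ.Realize default (Subtype.val ∘ xs) ↔ ψ.Realize default xs := by
  induction ψ with
  | falsum => rfl
  | equal t₁ t₂ =>
    exact (BoundedFormula.IsAtomic.equal t₁ t₂).isQF.realize_substructure_iff xs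
  | rel R ts =>
    exact (BoundedFormula.IsAtomic.rel R ts).isQF.realize_substructure_iff xs
  | imp f g ihf ihg =>
    exact imp_congr (ihf (by simp only [qr] at hψ; omega) xs)
      (ihg (by simp only [qr] at hψ; omega) xs)
  | @all n θ ih =>
    have hθ : qr θ + (n + 1) ≤ m := by simp only [qr] at hψ; omega
    have ih' : ∀ x : N, θ.Realize default (Fin.snoc (Subtype.val ∘ xs) (x : M)) ↔
        θ.Realize default (Fin.snoc xs x) := fun x => by
      rw [← Fin.comp_snoc]; exact ih hθ _
    refine ⟨fun h x => (ih' x).mp (h x), fun h b => ?_⟩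
    by_cases hb : b ∈ N
    · exact (ih' ⟨b, hb⟩).mpr (h _)
    have hxs : (Set.range (Subtype.val ∘ xs)).encard < m := by
      rw [← Set.image_univ]
      exact (Set.encard_image_le _ _).trans_lt (by simpa using (show n < m by omega))
    obtain ⟨b', hb'N, hc, hb'xs⟩ := hN.exists_colorOf_eq hb hxs
    exact (realize_snoc_iff_of_colorOf_eq θ hc (fun ⟨j, hj⟩ => hb (hj ▸ (xs j).2)) hb'xs).mpr
      ((ih' ⟨b', hb'N⟩).mpr (h _))

theorem IsColorSaturated.realize_sentence_iff {m : ℕ} {N : (unaryLang k).Substructure M}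
    (hN : IsColorSaturated k m (N : Set M)) (φ : (unaryLang k).Sentence) (hφ : qr φ ≤ m) :
    N ⊨ φ ↔ M ⊨ φ := by
  have := hN.realize_boundedFormula_iff φ (by simpa using hφ) default
  rwa [Subsingleton.elim (Subtype.val ∘ default) default, Iff.comm] at this

end UnaryStructures

/-- Let `τ` be a vocabulary of `k` unary predicate symbols and `φ` an FO(τ) sentence of
quantifier rank `r` with `φ ∈ PSC(B)`. Then, with `n = r·2^k`, `φ` is logically equivalent to:
there exist elements `a₁,…,a_B` such that for all elements `b₁,…,b_n`, the substructure
induced on `{a₁,…,a_B,b₁,…,b_n}` satisfies `φ`. -/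
theorem statement5 (k B r : ℕ) (φ : (unaryLang k).Sentence) (hr : qr φ = r)
    (h : PSC φ B) :
    ∀ (M : Type) [(unaryLang k).Structure M] [Nonempty M],
      M ⊨ φ ↔
        ∃ a : Fin B → M, ∀ b : Fin (r * 2 ^ k) → M,
          ↥(Substructure.closure (unaryLang k) (Set.range a ∪ Set.range b)) ⊨ φ := by
  intro M _ _
  constructor
  · intro hM
    obtain ⟨C, hCcard, hcore⟩ := h M hM
    obtain ⟨a, hCa⟩ :=
      exists_fin_subset_range_of_encard_le (s := (C : Set M)) (by simpa using hCcard)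
    refine ⟨a, fun b => ?_⟩
    rcases Nat.eq_zero_or_pos r with rfl | hr
    · exact ((isColorSaturated_zero _).realize_sentence_iff φ hr.le).mpr hM
    · exact hcore _ (hCa.trans (Set.subset_union_left.trans Substructure.subset_closure))
        ⟨⟨b ⟨0, by positivity⟩, Substructure.subset_closure (Or.inr ⟨_, rfl⟩)⟩⟩
  · rintro ⟨a, ha⟩
    obtain ⟨b, hb⟩ := exists_isColorSaturated_range (k := k) (M := M) r
    exact ((hb.mono (Set.subset_union_right.trans Substructure.subset_closure)).realize_sentence_iff
      φ hr.le).mp (ha b)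

end Stmt
end

section
/- For an FO sentence φ over a relational vocabulary and k, l ∈ ℕ, the following are equivalent: (1) φ ∈ PSC(k) and ¬φ ∈ PSC(l); (2) φ is logically equivalent both to a sentence of the form ∃x₁…∃x_k ∀y₁…∀y_l β₁ and to a sentence of the form ∀y₁…∀y_l ∃x₁…∃x_k β₂, with β₁, β₂ quantifier-free. -/
/-!
If `φ ∈ PSC(k)` and `∼φ ∈ PSC(l)`, let `β` be the disjunction of the atomic types of all tuples
`(c, e)`, `|c| = k`, `|e| = l`, taken in models of `φ` in which `c` enumerates a core; there are
finitely many atomic types since the vocabulary is finite and every term is a variable or a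
constant. A model of `φ` satisfies `∃c ∀e β` with `c` enumerating a core. Conversely, if
`M ⊨ ∃a ∀d β` and `M ⊨ ∼φ`, choose `d` enumerating a core of `∼φ`: then `(a, d)` has the atomic
type of some such `(c, e)`, so the substructures generated by the two tuples are isomorphic, yet
one contains a core of `∼φ` and the other a core of `φ`. When there are neither variables nor
constants these substructures are empty, and the disjoint union of the two structures takes
their place.

In the other direction, the witnesses of a true `∃∀` sentence with quantifier-free matrix form a
core, since quantifier-free formulas are preserved under substructures; and `φ` has `∀∃` form
exactly when `∼φ` has `∃∀` form.
-/

open FirstOrder Language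

universe u v

namespace Stmt

variable {L : FirstOrder.Language.{u, v}}

section Prefix
variable {M : Type*} [L.Structure M] {n : ℕ}

theorem realize_allsK {j : ℕ} (β : L.BoundedFormula Empty (n + j)) (v : Empty → M)
    (xs : Fin n → M) :
    (allsK j β).Realize v xs ↔ ∀ ys : Fin j → M, β.Realize v (Fin.append xs ys) := by
  induction j generalizing n with
  | zero => simp [allsK, Fin.append_right_nil]
  | succ j ih =>
    rw [allsK, ih]
    simp only [BoundedFormula.realize_all]
    refine ⟨fun h ys => ?_, fun h ys y => ?_⟩
    · rw [← Fin.snoc_init_self ys, Fin.append_snoc]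
      exact h _ _
    · rw [← Fin.append_snoc]
      exact h _

theorem realize_exsK {j : ℕ} (β : L.BoundedFormula Empty (n + j)) (v : Empty → M)
    (xs : Fin n → M) :
    (exsK j β).Realize v xs ↔ ∃ ys : Fin j → M, β.Realize v (Fin.append xs ys) := by
  induction j generalizing n with
  | zero => simp [exsK, Fin.append_right_nil]
  | succ j ih =>
    rw [exsK, ih]
    simp only [BoundedFormula.realize_ex]
    refine ⟨fun ⟨ys, y, h⟩ => ⟨Fin.snoc ys y, by rwa [Fin.append_snoc]⟩, fun ⟨ys, h⟩ => ?_⟩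
    exact ⟨Fin.init ys, ys (Fin.last j), by rwa [← Fin.append_snoc, Fin.snoc_init_self]⟩

theorem realize_sigma2 {B n : ℕ} (β : L.BoundedFormula Empty (B + n)) :
    M ⊨ sigma2 B n β ↔
      ∃ xs : Fin B → M, ∀ ys : Fin n → M, β.Realize default (Fin.append xs ys) := by
  simp only [sigma2, Sentence.Realize, BoundedFormula.realize_exs, realize_allsK]

theorem realize_pi2 {k m : ℕ} (β : L.BoundedFormula Empty (k + m)) :
    M ⊨ pi2 k m β ↔
      ∀ xs : Fin k → M, ∃ ys : Fin m → M, β.Realize default (Fin.append xs ys) := by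
  simp only [pi2, Sentence.Realize, BoundedFormula.realize_alls, realize_exsK]

end Prefix

namespace Equiv

theorem symm {φ ψ : L.Sentence} (h : Equiv φ ψ) : Equiv ψ φ := by
  intro M _ _
  exact (h M).symm

theorem trans {φ ψ χ : L.Sentence} (h₁ : Equiv φ ψ) (h₂ : Equiv ψ χ) : Equiv φ χ := by
  intro M _ _
  exact (h₁ M).trans (h₂ M)

theorem not {φ ψ : L.Sentence} (h : Equiv φ ψ) : Equiv φ.not ψ.not := by
  intro M _ _
  simp only [Sentence.realize_not, h M]

end Equiv

theorem equiv_not_not (φ : L.Sentence) : Equiv φ φ.not.not := by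
  intro M _ _
  simp only [Sentence.realize_not, not_not]

theorem equiv_not_sigma2 {k l : ℕ} (β : L.BoundedFormula Empty (k + l)) :
    Equiv (sigma2 k l β).not (pi2 k l β.not) := by
  intro M _ _
  simp [realize_sigma2, realize_pi2]

theorem equiv_not_pi2 {k l : ℕ} (β : L.BoundedFormula Empty (k + l)) :
    Equiv (pi2 k l β).not (sigma2 k l β.not) := by
  intro M _ _
  simp [realize_sigma2, realize_pi2]

theorem IsCore.mono {φ : L.Sentence} {M : Type max u v} [L.Structure M] {C C' : Set M}
    (h : IsCore φ M C) (hCC' : C ⊆ C') : IsCore φ M C' :=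
  fun N hN hne => h N (hCC'.trans hN) hne

theorem PSC.congr {φ ψ : L.Sentence} {k : ℕ} (h : PSC φ k) (hφψ : Equiv φ ψ) : PSC ψ k := by
  intro M _ _ hM
  obtain ⟨C, hCk, hC⟩ := h M ((hφψ M).2 hM)
  exact ⟨C, hCk, fun N hN hne => (hφψ N).1 (hC N hN hne)⟩

theorem _root_.Fin.comp_append {α β : Type*} {m n : ℕ} (f : α → β) (xs : Fin m → α)
    (ys : Fin n → α) :
    f ∘ Fin.append xs ys = Fin.append (f ∘ xs) (f ∘ ys) := by
  funext i
  cases i using Fin.addCases <;> simp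

theorem psc_sigma2 {k l : ℕ} {β : L.BoundedFormula Empty (k + l)} (hβ : β.IsQF) :
    PSC (sigma2 k l β) k := by
  classical
  intro M _ _ hM
  obtain ⟨a, ha⟩ := (realize_sigma2 β).1 hM
  refine ⟨Finset.univ.image a, Finset.card_image_le.trans (by simp), fun N hN _ => ?_⟩
  have haN : ∀ i, a i ∈ N := fun i => hN (by simp)
  refine (realize_sigma2 β).2 ⟨fun i => ⟨a i, haN i⟩, fun ys => ?_⟩
  rw [← hβ.realize_embedding N.subtype, Fin.comp_append, Unique.eq_default (N.subtype ∘ default)]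
  exact ha _

/-- Without function symbols of positive arity, every term in `n` variables is a variable or a
constant. -/
def VarOrConst (L : FirstOrder.Language.{u, v}) (n : ℕ) : Type _ := Fin n ⊕ L.Constants

namespace VarOrConst

variable {n : ℕ}

def term : VarOrConst L n → L.Term (Empty ⊕ Fin n) :=
  Sum.elim (fun i => Term.var (Sum.inr i)) Constants.term

def eval {M : Type*} [L.Structure M] (xs : Fin n → M) : VarOrConst L n → M :=
  Sum.elim xs (↑)

theorem realize_term {M : Type*} [L.Structure M] (v : Empty → M) (xs : Fin n → M)
    (s : VarOrConst L n) : s.term.realize (Sum.elim v xs) = s.eval xs := by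
  rcases s with i | c
  · rfl
  · exact funMap_eq_coe_constants

end VarOrConst

def Atom (L : FirstOrder.Language.{u, v}) (n : ℕ) : Type _ :=
  (VarOrConst L n × VarOrConst L n) ⊕ (Σ R : (Σ m, L.Relations m), Fin R.1 → VarOrConst L n)

namespace Atom

variable {n : ℕ}

def toFormula : Atom L n → L.BoundedFormula Empty n
  | .inl (s, t) => s.term.bdEqual t.term
  | .inr ⟨⟨_, R⟩, ts⟩ => R.boundedFormula fun i => (ts i).term

def Holds {M : Type*} [L.Structure M] (xs : Fin n → M) : Atom L n → Prop
  | .inl (s, t) => s.eval xs = t.eval xs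
  | .inr ⟨⟨_, R⟩, ts⟩ => Structure.RelMap R fun i => (ts i).eval xs

theorem isQF_toFormula (a : Atom L n) : a.toFormula.IsQF := by
  rcases a with ⟨s, t⟩ | ⟨⟨m, R⟩, ts⟩
  · exact (BoundedFormula.IsAtomic.equal _ _).isQF
  · exact (BoundedFormula.IsAtomic.rel _ _).isQF

theorem realize_toFormula {M : Type*} [L.Structure M] (a : Atom L n) (v : Empty → M)
    (xs : Fin n → M) : a.toFormula.Realize v xs ↔ a.Holds xs := by
  rcases a with ⟨s, t⟩ | ⟨⟨m, R⟩, ts⟩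
  · simp only [toFormula, Holds, BoundedFormula.realize_bdEqual, VarOrConst.realize_term]
  · simp only [toFormula, Holds, BoundedFormula.realize_rel, VarOrConst.realize_term]

instance [Finite L.Symbols] : Finite (Atom L n) :=
  have : Finite ((Σ m, L.Functions m) ⊕ (Σ m, L.Relations m)) := ‹Finite L.Symbols›
  have : Finite (Σ m, L.Functions m) := .sum_left (Σ m, L.Relations m)
  have : Finite (Σ m, L.Relations m) := .sum_right (Σ m, L.Functions m)
  have : Finite L.Constants := .of_injective _ (sigma_mk_injective (i := 0))
  inferInstanceAs <| Finite <|
    (Fin n ⊕ L.Constants) × (Fin n ⊕ L.Constants) ⊕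
      (Σ R : (Σ m, L.Relations m), Fin R.1 → Fin n ⊕ L.Constants)

end Atom

variable (L) in
def atomicType {M : Type*} [L.Structure M] {n : ℕ} (xs : Fin n → M) : Set (Atom L n) :=
  {a | a.Holds xs}

theorem mem_atomicType_nullary {M : Type*} [L.Structure M] {n : ℕ} (xs : Fin n → M)
    (R : L.Relations 0) :
    (.inr ⟨⟨0, R⟩, Fin.elim0⟩ : Atom L n) ∈ atomicType L xs ↔
      Structure.RelMap R (default : Fin 0 → M) := by
  change Structure.RelMap R _ ↔ _
  rw [Subsingleton.elim (fun i => _) default]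

theorem _root_.FirstOrder.Language.BoundedFormula.IsQF.iSup {α β : Type*} [Finite β] {n : ℕ}
    {f : β → L.BoundedFormula α n} (hf : ∀ b, (f b).IsQF) : (BoundedFormula.iSup f).IsQF := by
  let _ := Fintype.ofFinite β
  suffices ∀ l : List β, (l.map f |>.foldr (· ⊔ ·) ⊥).IsQF from this _
  intro l
  induction l with
  | nil => exact BoundedFormula.isQF_bot
  | cons b l ih => exact (hf b).sup ih

theorem _root_.FirstOrder.Language.BoundedFormula.IsQF.iInf {α β : Type*} [Finite β] {n : ℕ}
    {f : β → L.BoundedFormula α n} (hf : ∀ b, (f b).IsQF) : (BoundedFormula.iInf f).IsQF := by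
  let _ := Fintype.ofFinite β
  suffices ∀ l : List β, (l.map f |>.foldr (· ⊓ ·) ⊤).IsQF from this _
  intro l
  induction l with
  | nil => exact BoundedFormula.IsQF.top
  | cons b l ih => exact (hf b).inf ih

section TypeFormula

variable [Finite L.Symbols] {n : ℕ}

noncomputable def typeFormula (T : Set (Atom L n)) : L.BoundedFormula Empty n :=
  BoundedFormula.iInf (fun a : T => a.1.toFormula) ⊓
    BoundedFormula.iInf (fun a : ↥Tᶜ => ∼a.1.toFormula)

theorem isQF_typeFormula (T : Set (Atom L n)) : (typeFormula T).IsQF :=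
  (BoundedFormula.IsQF.iInf fun a => a.1.isQF_toFormula).inf
    (BoundedFormula.IsQF.iInf fun a => a.1.isQF_toFormula.not)

theorem realize_typeFormula {M : Type*} [L.Structure M] (T : Set (Atom L n)) (v : Empty → M)
    (xs : Fin n → M) : (typeFormula T).Realize v xs ↔ atomicType L xs = T := by
  simp only [typeFormula, BoundedFormula.realize_inf, BoundedFormula.realize_iInf,
    BoundedFormula.realize_not, Atom.realize_toFormula, Subtype.forall, Set.mem_compl_iff,
    Set.ext_iff, atomicType, Set.mem_ofPred_eq]
  exact ⟨fun h a => ⟨fun ha => by_contra (h.2 a · ha), (h.1 a ·)⟩,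
    fun h => ⟨fun a ha => (h a).2 ha, fun a ha ha' => ha ((h a).1 ha')⟩⟩

end TypeFormula

section TermRange

variable [∀ m, IsEmpty (L.Functions (m + 1))] {M M' : Type*} [L.Structure M] [L.Structure M']
  {n : ℕ}

variable (L) in
/-- The substructure generated by the entries of `xs`. -/
def termRange (xs : Fin n → M) : L.Substructure M where
  carrier := Set.range (VarOrConst.eval xs)
  fun_mem {m} f := by
    cases m with
    | zero => exact fun _ _ => ⟨Sum.inr f, funMap_eq_coe_constants.symm⟩
    | succ m => exact isEmptyElim f

theorem mem_termRange {xs : Fin n → M} {x : M} :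
    x ∈ termRange L xs ↔ ∃ s : VarOrConst L n, s.eval xs = x :=
  Iff.rfl

theorem eval_mem_termRange (xs : Fin n → M) (s : VarOrConst L n) : s.eval xs ∈ termRange L xs :=
  ⟨s, rfl⟩

namespace termRange

variable {xs : Fin n → M}

noncomputable def termOf (x : termRange L xs) : VarOrConst L n :=
  (mem_termRange.1 x.2).choose

theorem eval_termOf (x : termRange L xs) : (termOf x).eval xs = x :=
  (mem_termRange.1 x.2).choose_spec

variable (xs) (xs' : Fin n → M')

noncomputable def transfer (x : termRange L xs) : termRange L xs' :=
  ⟨(termOf x).eval xs', eval_mem_termRange xs' _⟩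

variable {xs xs'}

theorem coe_transfer (h : atomicType L xs = atomicType L xs') {x : termRange L xs}
    {s : VarOrConst L n} (hx : (x : M) = s.eval xs) : (transfer xs xs' x : M') = s.eval xs' :=
  (Set.ext_iff.1 h (.inl (termOf x, s))).1 ((eval_termOf x).trans hx)

noncomputable def equivOfAtomicTypeEq (h : atomicType L xs = atomicType L xs') :
    termRange L xs ≃[L] termRange L xs' where
  toFun := transfer xs xs'
  invFun := transfer xs' xs
  left_inv x := Subtype.ext <| (coe_transfer h.symm rfl).trans (eval_termOf x)
  right_inv x := Subtype.ext <| (coe_transfer h rfl).trans (eval_termOf x)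
  map_fun' {m} f x := by
    cases m with
    | zero =>
      refine Subtype.ext ((coe_transfer h (s := Sum.inr f) funMap_eq_coe_constants).trans ?_)
      exact funMap_eq_coe_constants.symm
    | succ m => exact isEmptyElim f
  map_rel' {m} R x := by
    have hx : (fun i => (x i : M)) = fun i => (termOf (x i)).eval xs :=
      funext fun i => (eval_termOf (x i)).symm
    change Structure.RelMap R (fun i => (termOf (x i)).eval xs') ↔
      Structure.RelMap R (fun i => (x i : M))
    rw [hx]
    exact (Set.ext_iff.1 h (.inr ⟨⟨m, R⟩, fun i => termOf (x i)⟩)).symm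

end termRange

end TermRange

section Amalgam

variable [L.IsRelational] {M M' : Type*} [L.Structure M] [L.Structure M']

variable (M M') in
abbrev sumStructure : L.Structure (M ⊕ M') where
  RelMap R x :=
    (∃ y, Sum.inl ∘ y = x ∧ Structure.RelMap R y) ∨ (∃ y, Sum.inr ∘ y = x ∧ Structure.RelMap R y)

attribute [local instance] sumStructure

variable (h : ∀ R : L.Relations 0,
  Structure.RelMap R (default : Fin 0 → M) ↔ Structure.RelMap R (default : Fin 0 → M'))
include h

theorem relMap_inl_iff {m : ℕ} (R : L.Relations m) (y : Fin m → M) :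
    Structure.RelMap R (Sum.inl ∘ y : Fin m → M ⊕ M') ↔ Structure.RelMap R y := by
  refine ⟨?_, fun hR => .inl ⟨y, rfl, hR⟩⟩
  rintro (⟨y', hy, hR⟩ | ⟨y', hy, hR⟩)
  · rwa [← Sum.inl_injective.comp_left hy]
  · cases m with
    | zero => rwa [Subsingleton.elim y default, h, Subsingleton.elim default y']
    | succ m => exact absurd (congrFun hy 0) Sum.inr_ne_inl

theorem relMap_inr_iff {m : ℕ} (R : L.Relations m) (y : Fin m → M') :
    Structure.RelMap R (Sum.inr ∘ y : Fin m → M ⊕ M') ↔ Structure.RelMap R y := by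
  refine ⟨?_, fun hR => .inr ⟨y, rfl, hR⟩⟩
  rintro (⟨y', hy, hR⟩ | ⟨y', hy, hR⟩)
  · cases m with
    | zero => rwa [Subsingleton.elim y default, ← h, Subsingleton.elim default y']
    | succ m => exact absurd (congrFun hy 0) Sum.inl_ne_inr
  · rwa [← Sum.inr_injective.comp_left hy]

def sumInl : M ↪[L] M ⊕ M' where
  toFun := Sum.inl
  inj' := Sum.inl_injective
  map_fun' f := isEmptyElim f
  map_rel' := relMap_inl_iff h

def sumInr : M' ↪[L] M ⊕ M' where
  toFun := Sum.inr
  inj' := Sum.inr_injective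
  map_fun' f := isEmptyElim f
  map_rel' := relMap_inr_iff h

end Amalgam

theorem PSC.realize_of_embedding {φ : L.Sentence} (hφ : PSC φ 0) {M : Type max u v}
    [L.Structure M] [Nonempty M] (hM : M ⊨ φ) {N : Type*} [L.Structure N] [Nonempty N]
    (f : N ↪[L] M) : N ⊨ φ := by
  obtain ⟨C, hC0, hC⟩ := hφ M hM
  obtain rfl : C = ∅ := Finset.card_eq_zero.1 (Nat.le_zero.1 hC0)
  have : Nonempty f.toHom.range := ⟨⟨_, f.toHom.mem_range_self (Classical.arbitrary N)⟩⟩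
  exact (StrongHomClass.realize_sentence f.equivRange φ).2 (hC _ (by simp) this)

theorem realize_of_relMap_nullary_iff [L.IsRelational] {φ : L.Sentence} (hφ : PSC φ 0)
    (hnφ : PSC φ.not 0) {M M' : Type max u v} [L.Structure M] [L.Structure M'] [Nonempty M]
    [Nonempty M'] (h : ∀ R : L.Relations 0,
      Structure.RelMap R (default : Fin 0 → M) ↔ Structure.RelMap R (default : Fin 0 → M'))
    (hM' : M' ⊨ φ) : M ⊨ φ := by
  let _ : L.Structure (M ⊕ M') := sumStructure M M'
  by_cases hW : (M ⊕ M') ⊨ φ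
  · exact hφ.realize_of_embedding hW (sumInl h)
  · have := hnφ.realize_of_embedding ((Sentence.realize_not _).2 hW) (sumInr h)
    exact absurd hM' ((Sentence.realize_not _).1 this)

theorem _root_.Finset.exists_subset_range_of_card_le {M : Type*} [Nonempty M] (C : Finset M)
    {n : ℕ} (hC : C.card ≤ n) : ∃ xs : Fin n → M, ↑C ⊆ Set.range xs := by
  refine ⟨fun i => C.toList.getD i (Classical.arbitrary M), fun x hx => ?_⟩
  obtain ⟨i, hi, rfl⟩ := List.mem_iff_getElem.1 (Finset.mem_toList.2 hx)
  exact ⟨⟨i, hi.trans_le (C.length_toList ▸ hC)⟩, List.getD_eq_getElem _ _ hi⟩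

def coreTypes (φ : L.Sentence) (k l : ℕ) : Set (Set (Atom L (k + l))) :=
  {T | ∃ (M : Type max u v) (_ : L.Structure M) (_ : Nonempty M) (c : Fin k → M) (e : Fin l → M),
    M ⊨ φ ∧ IsCore φ M (Set.range c) ∧ atomicType L (Fin.append c e) = T}

noncomputable def coreTypesFormula [Finite L.Symbols] (φ : L.Sentence) (k l : ℕ) :
    L.BoundedFormula Empty (k + l) :=
  BoundedFormula.iSup fun T : coreTypes φ k l => typeFormula T.1

theorem realize_coreTypesFormula [Finite L.Symbols] {φ : L.Sentence} {k l : ℕ} {M : Type*}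
    [L.Structure M] (v : Empty → M) (xs : Fin (k + l) → M) :
    (coreTypesFormula φ k l).Realize v xs ↔ atomicType L xs ∈ coreTypes φ k l := by
  simp [coreTypesFormula, realize_typeFormula]

theorem atomicType_append_ne [∀ m, IsEmpty (L.Functions (m + 1))] {φ : L.Sentence} {k l : ℕ}
    (hk : PSC φ k) (hl : PSC φ.not l) {M M' : Type max u v} [L.Structure M] [L.Structure M']
    [Nonempty M] [Nonempty M'] {c : Fin k → M} (e : Fin l → M) (hM : M ⊨ φ)
    (hc : IsCore φ M (Set.range c)) (a : Fin k → M') {d : Fin l → M'} (hM' : M' ⊨ φ.not)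
    (hd : IsCore φ.not M' (Set.range d)) :
    atomicType L (Fin.append c e) ≠ atomicType L (Fin.append a d) := by
  intro h
  rcases isEmpty_or_nonempty (VarOrConst L (k + l)) with hempty | ⟨⟨s⟩⟩
  · obtain ⟨hvars, hconsts⟩ := isEmpty_sum.1 hempty
    obtain ⟨rfl, rfl⟩ : k = 0 ∧ l = 0 := by
      by_contra hkl
      exact hvars.false ⟨0, by omega⟩
    have : L.IsRelational
      | 0 => hconsts
      | _ + 1 => inferInstance
    refine (Sentence.realize_not _).1 hM' (realize_of_relMap_nullary_iff hk hl (fun R => ?_) hM)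
    rw [← mem_atomicType_nullary (Fin.append a d), ← mem_atomicType_nullary (Fin.append c e), h]
  · have hφ : termRange L (Fin.append c e) ⊨ φ := by
      refine hc _ ?_ ⟨⟨_, eval_mem_termRange _ s⟩⟩
      rintro _ ⟨i, rfl⟩
      exact ⟨.inl (Fin.castAdd l i), Fin.append_left c e i⟩
    have hnφ : termRange L (Fin.append a d) ⊨ φ.not := by
      refine hd _ ?_ ⟨⟨_, eval_mem_termRange _ s⟩⟩
      rintro _ ⟨i, rfl⟩
      exact ⟨.inl (Fin.natAdd k i), Fin.append_right a d i⟩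
    exact (Sentence.realize_not _).1 hnφ
      ((StrongHomClass.realize_sentence (termRange.equivOfAtomicTypeEq h) φ).1 hφ)

theorem exists_isQF_equiv_sigma2 [Finite L.Symbols] [∀ m, IsEmpty (L.Functions (m + 1))]
    {φ : L.Sentence} {k l : ℕ} (hk : PSC φ k) (hl : PSC φ.not l) :
    ∃ β : L.BoundedFormula Empty (k + l), β.IsQF ∧ Equiv φ (sigma2 k l β) := by
  refine ⟨coreTypesFormula φ k l, BoundedFormula.IsQF.iSup fun T => isQF_typeFormula T.1, ?_⟩
  intro M _ _
  simp only [realize_sigma2, realize_coreTypesFormula]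
  constructor
  · intro hM
    obtain ⟨C, hCk, hC⟩ := hk M hM
    obtain ⟨c, hc⟩ := C.exists_subset_range_of_card_le hCk
    exact ⟨c, fun e => ⟨M, _, ‹_›, c, e, hM, hC.mono hc, rfl⟩⟩
  · rintro ⟨a, ha⟩
    by_contra hM
    have hM' : M ⊨ φ.not := (Sentence.realize_not _).2 hM
    obtain ⟨D, hDl, hD⟩ := hl M hM'
    obtain ⟨d, hd⟩ := D.exists_subset_range_of_card_le hDl
    obtain ⟨M', _, _, c, e, hM'φ, hc, h⟩ := ha d
    exact atomicType_append_ne hk hl e hM'φ hc a hM' (hD.mono hd) h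

/-- For an FO sentence `φ` over a (finite) relational vocabulary and `k, l ∈ ℕ`, the following
are equivalent: (1) `φ ∈ PSC(k)` and `¬φ ∈ PSC(l)`; (2) `φ` is logically equivalent both to a
sentence `∃x₁…x_k ∀y₁…y_l β₁` and to a sentence `∀y₁…y_l ∃x₁…x_k β₂`, with `β₁`, `β₂`
quantifier-free. -/
theorem statement10 [Finite L.Symbols] [∀ n, IsEmpty (L.Functions (n + 1))]
    (φ : L.Sentence) (k l : ℕ) :
    (PSC φ k ∧ PSC φ.not l) ↔
      ((∃ β₁ : L.BoundedFormula Empty (k + l), β₁.IsQF ∧ Equiv φ (sigma2 k l β₁)) ∧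
        (∃ β₂ : L.BoundedFormula Empty (l + k), β₂.IsQF ∧ Equiv φ (pi2 l k β₂))) := by
  constructor
  · rintro ⟨hk, hl⟩
    obtain ⟨γ, hγ, hφγ⟩ := exists_isQF_equiv_sigma2 hl (hk.congr (equiv_not_not φ))
    exact ⟨exists_isQF_equiv_sigma2 hk hl,
      γ.not, hγ.not, (equiv_not_not φ).trans (hφγ.not.trans (equiv_not_sigma2 γ))⟩
  · rintro ⟨⟨β₁, hβ₁, hφβ₁⟩, β₂, hβ₂, hφβ₂⟩
    exact ⟨(psc_sigma2 hβ₁).congr hφβ₁.symm,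
      (psc_sigma2 hβ₂.not).congr (hφβ₂.not.trans (equiv_not_pi2 β₂)).symm⟩

end Stmt
end

section
/- Let L be a regular language over a finite alphabet Σ accepted by a DFA with n states, let B ∈ ℕ, and let w ∈ Σ* be a word of length greater than N = (B+1)·n. Let A = {i₁,…,i_m} with m ≤ B be a set of positions of w. Then there is a word w₁ that occurs in w as a (scattered) subword via a strictly increasing embedding of positions whose range contains A, such that |w₁| ≤ N and w₁ ∈ L if and only if w ∈ L. -/
/-!
Mark the prefix lengths `k = 0, …, |w|` of `w` by the pair (state of the automaton after reading
`w.take k`, number of positions of `A` below `k`). There are at most `(#A + 1) · n` marks, so once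
`|w| ≥ (#A + 1) · n` two prefix lengths `i < j` share their mark. Cutting out the factor
`w[i, j)` then neither changes the state reached at the end nor deletes a position of `A`, and the
shorter word embeds back into `w`. Iterating reaches length at most `(B + 1) · n`.
-/

open Finset

variable {α σ : Type*}

theorem Fintype.exists_lt_map_eq_of_card_lt {ι β : Type*} [LinearOrder ι] [Fintype ι] [Fintype β]
    (f : ι → β) (h : Fintype.card β < Fintype.card ι) : ∃ x y, x < y ∧ f x = f y := by
  obtain ⟨x, y, hne, hxy⟩ := Fintype.exists_ne_map_eq_of_card_lt f h
  rcases hne.lt_or_gt with hlt | hlt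
  · exact ⟨x, y, hlt, hxy⟩
  · exact ⟨y, x, hlt, hxy.symm⟩

theorem Finset.lt_or_le_of_card_filter_lt_eq {β : Type*} [LinearOrder β] {A : Finset β} {i j : β}
    (hij : i ≤ j) (h : #{a ∈ A | a < i} = #{a ∈ A | a < j}) {a : β} (ha : a ∈ A) :
    a < i ∨ j ≤ a := by
  have hsub : {a ∈ A | a < i} ⊆ {a ∈ A | a < j} :=
    monotone_filter_right A fun _ _ h => h.trans_le hij
  have heq := eq_of_subset_of_card_le hsub h.ge
  by_contra! hmid
  have hmem : a ∈ {a ∈ A | a < j} := mem_filter.2 ⟨ha, hmid.2⟩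
  rw [← heq, mem_filter] at hmem
  exact hmid.1.not_gt hmem.2

theorem DFA.eval_take_append_drop (M : DFA α σ) {w : List α} {i j : ℕ}
    (h : M.eval (w.take i) = M.eval (w.take j)) : M.eval (w.take i ++ w.drop j) = M.eval w := by
  simp only [DFA.eval] at h ⊢
  rw [DFA.evalFrom_of_append, h, ← DFA.evalFrom_of_append, List.take_append_drop]

theorem DFA.exists_eval_take_eq_of_card_mul_le [Fintype σ] (M : DFA α σ) (w : List α)
    (A : Finset ℕ) (hw : (#A + 1) * Fintype.card σ ≤ w.length) :
    ∃ i j, i < j ∧ j ≤ w.length ∧ M.eval (w.take i) = M.eval (w.take j) ∧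
      ∀ a ∈ A, a < i ∨ j ≤ a := by
  let mark : Fin (w.length + 1) → σ × Fin (#A + 1) := fun k =>
    (M.eval (w.take k), ⟨#{a ∈ A | a < (k : ℕ)}, Nat.lt_succ_of_le (card_filter_le _ _)⟩)
  have hcard : Fintype.card (σ × Fin (#A + 1)) < Fintype.card (Fin (w.length + 1)) := by
    simp only [Fintype.card_prod, Fintype.card_fin]
    linarith [mul_comm (#A + 1) (Fintype.card σ)]
  obtain ⟨i, j, hij, hmark⟩ := Fintype.exists_lt_map_eq_of_card_lt mark hcard
  simp only [mark, Prod.mk.injEq, Fin.mk.injEq] at hmark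
  exact ⟨i, j, hij, j.is_le, hmark.1,
    fun a ha => lt_or_le_of_card_filter_lt_eq (Fin.val_le_of_le hij.le) hmark.2 ha⟩

def IsSubwordCovering (u w : List α) (A : Set (Fin w.length)) : Prop :=
  ∃ f : Fin u.length → Fin w.length,
    StrictMono f ∧ (∀ k, u.get k = w.get (f k)) ∧ A ⊆ Set.range f

theorem IsSubwordCovering.refl (w : List α) (A : Set (Fin w.length)) :
    IsSubwordCovering w w A :=
  ⟨id, strictMono_id, fun _ => rfl, fun a _ => ⟨a, rfl⟩⟩

theorem IsSubwordCovering.comp {u v w : List α} {A : Set (Fin w.length)}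
    {g : Fin v.length → Fin w.length} (hg : StrictMono g) (hget : ∀ k, v.get k = w.get (g k))
    (hA : A ⊆ Set.range g) (hu : IsSubwordCovering u v (g ⁻¹' A)) :
    IsSubwordCovering u w A := by
  obtain ⟨f, hf, hfget, hfA⟩ := hu
  refine ⟨g ∘ f, hg.comp hf, fun k => (hfget k).trans (hget (f k)), fun a ha => ?_⟩
  obtain ⟨k, rfl⟩ := hA ha
  obtain ⟨p, rfl⟩ := hfA ha
  exact ⟨p, rfl⟩

theorem List.exists_strictMono_get_take_append_drop (w : List α) {i j : ℕ} (hij : i ≤ j)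
    (hj : j ≤ w.length) :
    ∃ g : Fin (w.take i ++ w.drop j).length → Fin w.length, StrictMono g ∧
      (∀ k, (w.take i ++ w.drop j).get k = w.get (g k)) ∧
      {a : Fin w.length | (a : ℕ) < i ∨ j ≤ a} ⊆ Set.range g := by
  have hlen : (w.take i ++ w.drop j).length = i + (w.length - j) := by
    simp only [length_append, length_take, length_drop]
    omega
  let g : Fin (w.take i ++ w.drop j).length → Fin w.length := fun k =>
    ⟨if (k : ℕ) < i then k else k + (j - i), by have := k.is_lt; split <;> omega⟩
  refine ⟨g, fun k l hkl => ?_, fun k => ?_, fun a (ha : (a : ℕ) < i ∨ j ≤ a) => ?_⟩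
  · simp only [g, Fin.lt_def] at hkl ⊢
    split <;> split <;> omega
  · have hk := k.is_lt
    simp only [g, get_eq_getElem, getElem_append, getElem_take, getElem_drop, length_take]
    split <;> split <;> first | rfl | omega | (congr 1; omega)
  · refine ⟨⟨if (a : ℕ) < i then a else a - (j - i), ?_⟩, ?_⟩
    · have := a.is_lt
      rw [hlen]
      split <;> omega
    · simp only [g, Fin.ext_iff]
      split <;> (try split) <;> omega

theorem DFA.exists_isSubwordCovering_length_le [Fintype σ] (M : DFA α σ) {B : ℕ} (w : List α)
    (A : Finset (Fin w.length)) (hA : #A ≤ B) :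
    ∃ w₁, IsSubwordCovering w₁ w A ∧ w₁.length ≤ (B + 1) * Fintype.card σ ∧
      M.eval w₁ = M.eval w := by
  by_cases hshort : w.length ≤ (B + 1) * Fintype.card σ
  · exact ⟨w, .refl w A, hshort, rfl⟩
  obtain ⟨i, j, hij, hj, heval, hAcut⟩ :=
    M.exists_eval_take_eq_of_card_mul_le w (A.map Fin.valEmbedding) (by rw [card_map]; nlinarith)
  obtain ⟨g, hg, hget, hrange⟩ := w.exists_strictMono_get_take_append_drop hij.le hj
  have hAg : ↑A ⊆ Set.range g := fun a ha => hrange (hAcut a (mem_map_of_mem _ ha))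
  have hpre : #(A.preimage g hg.injective.injOn) ≤ B :=
    (card_le_card_of_injOn g (fun _ ha => mem_preimage.1 ha) hg.injective.injOn).trans hA
  have hshorter : (w.take i ++ w.drop j).length < w.length := by
    simp only [List.length_append, List.length_take, List.length_drop]
    omega
  obtain ⟨w₁, hw₁, hlen₁, heval₁⟩ := M.exists_isSubwordCovering_length_le _ _ hpre
  rw [coe_preimage] at hw₁
  exact ⟨w₁, hw₁.comp hg hget hAg, hlen₁, heval₁.trans (M.eval_take_append_drop heval)⟩
termination_by w.length

theorem statement11_general {α : Type} {σ : Type} [Fintype σ]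
    (M : DFA α σ) (n B : ℕ) (hn : Fintype.card σ = n)
    (w : List α)
    (A : Finset (Fin w.length)) (hA : A.card ≤ B) :
    ∃ (w₁ : List α) (f : Fin w₁.length → Fin w.length),
      StrictMono f ∧
      (∀ i : Fin w₁.length, w₁.get i = w.get (f i)) ∧
      (↑A : Set (Fin w.length)) ⊆ Set.range f ∧
      w₁.length ≤ (B + 1) * n ∧
      (w₁ ∈ M.accepts ↔ w ∈ M.accepts) := by
  obtain ⟨w₁, ⟨f, hf, hget, hAf⟩, hlen, heval⟩ := M.exists_isSubwordCovering_length_le w A hA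
  exact ⟨w₁, f, hf, hget, hAf, hn ▸ hlen, by rw [DFA.mem_accepts, DFA.mem_accepts, heval]⟩

/-- Let `L` be a regular language over a finite alphabet accepted by a DFA with `n` states,
`B ∈ ℕ`, and `w` a word of length greater than `N = (B+1)·n`. Let `A` be a set of at most `B`
positions of `w`. Then there is a word `w₁` occurring in `w` as a scattered subword via a
strictly increasing embedding of positions whose range contains `A`, such that `|w₁| ≤ N` and
`w₁` is accepted iff `w` is accepted. -/
theorem statement11 {α : Type} [Fintype α] {σ : Type} [Fintype σ]
    (M : DFA α σ) (n B : ℕ) (hn : Fintype.card σ = n)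
    (w : List α) (hw : (B + 1) * n < w.length)
    (A : Finset (Fin w.length)) (hA : A.card ≤ B) :
    ∃ (w₁ : List α) (f : Fin w₁.length → Fin w.length),
      StrictMono f ∧
      (∀ i : Fin w₁.length, w₁.get i = w.get (f i)) ∧
      (↑A : Set (Fin w.length)) ⊆ Set.range f ∧
      w₁.length ≤ (B + 1) * n ∧
      (w₁ ∈ M.accepts ↔ w ∈ M.accepts) :=
  statement11_general M n B hn w A hA
end

section
/- Let Σ be a finite alphabet and let S ⊆ Σ* be a set of words closed under taking (scattered) subwords. Then there exists a finite set T ⊆ Σ* of words such that for every word w ∈ Σ*, w ∈ S if and only if no member of T is a (scattered) subword of w. -/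
/-!
By Higman's lemma the subword order on words over a finite alphabet is a well-quasi-order.
The complement of `S` is closed under taking superwords, so it consists of the words lying above
one of its subword-minimal members; these minimal words form an antichain, hence a finite set,
and they are the forbidden subwords `T`.
-/

section FiniteBasis

variable {β : Type*} {r : β → β → Prop} [IsPartialOrder β r]

theorem WellQuasiOrdered.exists_minimal_rel (h : WellQuasiOrdered r) {U : Set β} {b : β}
    (hb : b ∈ U) : ∃ m ∈ U, r m b ∧ ∀ u ∈ U, r u m → u = m := by
  obtain ⟨m, ⟨hmU, hmb⟩, hmin⟩ :=
    h.wellFounded.has_min {u | u ∈ U ∧ r u b} ⟨b, hb, refl b⟩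
  refine ⟨m, hmU, hmb, fun u huU hum => antisymm hum ?_⟩
  by_contra hmu
  exact hmin u ⟨huU, _root_.trans hum hmb⟩ ⟨hum, hmu⟩

theorem WellQuasiOrdered.exists_finset_basis (h : WellQuasiOrdered r) {U : Set β}
    (hU : ∀ a ∈ U, ∀ b, r a b → b ∈ U) : ∃ T : Finset β, ∀ b, b ∈ U ↔ ∃ t ∈ T, r t b := by
  set M := {t | t ∈ U ∧ ∀ u ∈ U, r u t → u = t}
  have hM : IsAntichain r M := fun _ ha _ hb hab hr => hab (hb.2 _ ha.1 hr)
  have hMfin : M.Finite := hM.finite_of_wellQuasiOrdered h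
  refine ⟨hMfin.toFinset, fun b => ⟨fun hb => ?_, ?_⟩⟩
  · obtain ⟨m, hmU, hmb, hmin⟩ := h.exists_minimal_rel hb
    exact ⟨m, hMfin.mem_toFinset.mpr ⟨hmU, hmin⟩, hmb⟩
  · rintro ⟨t, ht, htb⟩
    exact hU t (hMfin.mem_toFinset.mp ht).1 b htb

end FiniteBasis

namespace List

instance isPartialOrder_sublist {α : Type*} : IsPartialOrder (List α) Sublist where
  refl := Sublist.refl
  trans _ _ _ := Sublist.trans
  antisymm _ _ := Sublist.antisymm

theorem sublistForall₂_eq {α : Type*} : SublistForall₂ (α := α) (· = ·) = Sublist := by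
  ext l₁ l₂
  simp [sublistForall₂_iff, forall₂_eq_eq_eq]

theorem wellQuasiOrdered_sublist {α : Type*} [Finite α] : WellQuasiOrdered (@Sublist α) := by
  have higman := (Set.partiallyWellOrderedOn_univ_iff.mpr
    (Finite.wellQuasiOrdered (· = · : α → α → Prop))).partiallyWellOrderedOn_sublistForall₂
  rw [← sublistForall₂_eq, ← Set.partiallyWellOrderedOn_univ_iff]
  simpa using higman

end List

/-- Let `Σ` be a finite alphabet and `S ⊆ Σ*` a set of words closed under taking (scattered)
subwords. Then there is a finite set `T` of words such that for every word `w`, `w ∈ S` iff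
no member of `T` is a (scattered) subword of `w`. -/
theorem statement12 {α : Type} [Finite α] (S : Set (List α))
    (hS : ∀ w ∈ S, ∀ u : List α, List.Sublist u w → u ∈ S) :
    ∃ T : Finset (List α), ∀ w : List α, w ∈ S ↔ ∀ t ∈ T, ¬ List.Sublist t w := by
  have hSc : ∀ a ∈ Sᶜ, ∀ b, List.Sublist a b → b ∈ Sᶜ :=
    fun a ha b hab hb => ha (hS b hb a hab)
  obtain ⟨T, hT⟩ := List.wellQuasiOrdered_sublist.exists_finset_basis hSc
  exact ⟨T, fun w => by simpa using (hT w).not⟩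
end

section
/- Let 𝒞 be the class of directed graphs (structures with one binary relation E) in which every vertex has in-degree at most 1 and out-degree at most 1 and there is no directed cycle of any length (i.e., disjoint unions of oriented paths). For each B ≥ 1, the FO sentence φ asserting that there are at least B vertices of total degree (in-degree plus out-degree) at most 1 belongs to PSC(B), but for no n ∈ ℕ is φ equivalent over 𝒞 to the condition: there exist elements a₁,…,a_B such that for all elements b₁,…,b_n, the substructure induced on {a₁,…,a_B,b₁,…,b_n} satisfies φ. -/
open FirstOrder Language

universe u v

namespace Stmt

variable {L : FirstOrder.Language.{u, v}}

/-- The edge relation of a structure for the language with a single binary relation. -/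
abbrev E (M : Type) [Language.graph.Structure M] (x y : M) : Prop :=
  Structure.RelMap Language.adj ![x, y]

/-- Membership in the class 𝒞 of directed graphs in which every vertex has in-degree at most 1
and out-degree at most 1 and there is no directed cycle of any length (i.e. disjoint unions of
oriented paths). -/
def InDirPaths (M : Type) [Language.graph.Structure M] : Prop :=
  (∀ x y z : M, E M x z → E M y z → x = y) ∧
  (∀ x y z : M, E M x y → E M x z → y = z) ∧
  ∀ (m : ℕ) (f : Fin (m + 1) → M), ¬ ∀ i, E M (f i) (f (i + 1))

/-- `v` has total degree (in-degree plus out-degree) at most 1. -/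
def TotalDegLE1 (M : Type) [Language.graph.Structure M] (v : M) : Prop :=
  (∀ u₁ u₂ : M, (E M u₁ v ∨ E M v u₁) → (E M u₂ v ∨ E M v u₂) → u₁ = u₂) ∧
  ∀ u : M, ¬ (E M u v ∧ E M v u)

/-! The witnesses of `φ` keep total degree at most 1 in every substructure containing them, so
they form a core. For the Σ₂ condition, take `B` disjoint copies of the bi-infinite path `ℤ`:
no vertex has total degree at most 1, so `φ` fails, yet in any finite induced subgraph meeting
every copy, the topmost vertex of each copy has total degree at most 1. -/

open BoundedFormula

def edgeFormula {k : ℕ} (i j : Fin k) : Language.graph.BoundedFormula Empty k :=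
  adj.boundedFormula₂ (&i) (&j)

def adjacentFormula {k : ℕ} (i j : Fin k) : Language.graph.BoundedFormula Empty k :=
  edgeFormula i j ⊔ edgeFormula j i

def totalDegLE1Formula {k : ℕ} (i : Fin k) : Language.graph.BoundedFormula Empty k :=
  ((adjacentFormula (Fin.last k).castSucc i.castSucc.castSucc ⊓
      adjacentFormula (Fin.last (k + 1)) i.castSucc.castSucc ⟹
    (&(Fin.last k).castSucc =' &(Fin.last (k + 1)))).all.all) ⊓
  (∼(edgeFormula (Fin.last k) i.castSucc ⊓ edgeFormula i.castSucc (Fin.last k))).all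

lemma realize_totalDegLE1Formula {M : Type} [Language.graph.Structure M] {k : ℕ} (i : Fin k)
    (xs : Fin k → M) :
    (totalDegLE1Formula i).Realize default xs ↔ TotalDegLE1 M (xs i) := by
  simp only [totalDegLE1Formula, adjacentFormula, edgeFormula, realize_inf, realize_not,
    realize_all, realize_imp, realize_sup, realize_rel₂, realize_bdEqual, Term.realize_var,
    Function.comp_apply, Sum.elim_inr, Fin.snoc_castSucc, Fin.snoc_last, TotalDegLE1, and_imp]

noncomputable def lowDegreeSentence (B : ℕ) : Language.graph.Sentence :=
  (BoundedFormula.iInf (fun p : {p : Fin B × Fin B // p.1 ≠ p.2} => ∼(&p.1.1 =' &p.1.2)) ⊓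
    BoundedFormula.iInf totalDegLE1Formula).exs

lemma realize_lowDegreeSentence {B : ℕ} (M : Type) [Language.graph.Structure M] :
    M ⊨ lowDegreeSentence B ↔
      ∃ f : Fin B → M, Function.Injective f ∧ ∀ i, TotalDegLE1 M (f i) := by
  rw [lowDegreeSentence, Sentence.Realize, realize_exs]
  refine exists_congr fun xs => (realize_inf ..).trans (and_congr ?_ ?_)
  · simp only [realize_iInf, realize_not, realize_bdEqual, Term.realize_var, Function.comp_apply,
      Sum.elim_inr, Subtype.forall, Prod.forall]
    exact ⟨fun h i j hij => by_contra fun hne => h i j hne hij, fun h i j hne hij => hne (h hij)⟩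
  · simp only [realize_iInf, realize_totalDegLE1Formula]

lemma E_substructure {M : Type} [Language.graph.Structure M]
    (N : Language.graph.Substructure M) (x y : N) : E N x y ↔ E M x y := by
  show Structure.RelMap adj (fun i => ((![x, y] i : N) : M)) ↔ Structure.RelMap adj ![(x : M), y]
  exact Iff.of_eq (congrArg _ (funext fun i => by fin_cases i <;> rfl))

lemma TotalDegLE1.substructure {M : Type} [Language.graph.Structure M]
    {N : Language.graph.Substructure M} {v : N} (h : TotalDegLE1 M v) : TotalDegLE1 N v := by
  simp only [TotalDegLE1, E_substructure] at h ⊢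
  exact ⟨fun u₁ u₂ h₁ h₂ => Subtype.ext (h.1 u₁ u₂ h₁ h₂), fun u => h.2 u⟩

lemma totalDegLE1_of_forall_not_E {M : Type} [Language.graph.Structure M] {v : M}
    (hout : ∀ u, ¬ E M v u) (hin : ∀ u₁ u₂, E M u₁ v → E M u₂ v → u₁ = u₂) :
    TotalDegLE1 M v :=
  ⟨fun u₁ u₂ h₁ h₂ => hin u₁ u₂ (h₁.resolve_right (hout u₁)) (h₂.resolve_right (hout u₂)),
    fun u h => hout u h.2⟩

lemma not_cycle_of_E_lt {M : Type} [Language.graph.Structure M] {α : Type*} [LinearOrder α]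
    (g : M → α) (hg : ∀ x y, E M x y → g x < g y) (m : ℕ) (f : Fin (m + 1) → M) :
    ¬ ∀ i, E M (f i) (f (i + 1)) := fun hf =>
  let ⟨i, hi⟩ := Finite.exists_max (g ∘ f)
  (hg _ _ (hf i)).not_ge (hi (i + 1))

lemma psc_lowDegreeSentence (B : ℕ) : PSC (lowDegreeSentence B) B := by
  classical
  intro M _ _ hM
  obtain ⟨f, hf, hdeg⟩ := (realize_lowDegreeSentence M).1 hM
  refine ⟨Finset.univ.image f, Finset.card_image_le.trans (by simp), fun N hN _ => ?_⟩
  have hfN : ∀ i, f i ∈ N := fun i => hN (by simp)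
  exact (realize_lowDegreeSentence N).2 ⟨fun i => ⟨f i, hfN i⟩,
    fun i j hij => hf (congrArg Subtype.val hij), fun i => (hdeg i).substructure⟩

abbrev linesStructure (ι : Type) : Language.graph.Structure (ι × ℤ) where
  RelMap | .adj => fun x => x 1 = ((x 0).1, (x 0).2 + 1)

section Lines

variable {ι : Type}

attribute [local instance] linesStructure

lemma lines_E {x y : ι × ℤ} : E (ι × ℤ) x y ↔ y = (x.1, x.2 + 1) := Iff.rfl

lemma lines_inDirPaths : InDirPaths (ι × ℤ) := by
  refine ⟨fun x y z hx hy => ?_, fun x y z hy hz => by rw [lines_E] at hy hz; rw [hy, hz],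
    not_cycle_of_E_lt Prod.snd fun x y h => by rw [lines_E.1 h]; omega⟩
  rw [lines_E] at hx hy
  rw [hx, Prod.mk.injEq] at hy
  exact Prod.ext hy.1 (by omega)

lemma lines_not_totalDegLE1 (v : ι × ℤ) : ¬ TotalDegLE1 (ι × ℤ) v := fun h => by
  have := h.1 (v.1, v.2 - 1) (v.1, v.2 + 1) (Or.inl (lines_E.2 (by simp)))
    (Or.inr (lines_E.2 rfl))
  simp only [Prod.mk.injEq, true_and] at this
  omega

lemma exists_lines_top {S : Set (ι × ℤ)} (hS : S.Finite) {v : ι × ℤ} (hv : v ∈ S) :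
    ∃ x, (v.1, x) ∈ S ∧ (v.1, x + 1) ∉ S := by
  obtain ⟨x, hx, hmax⟩ := Set.exists_max_image (Prod.mk v.1 ⁻¹' S) id
    (hS.preimage (Prod.mk_right_injective v.1).injOn) ⟨v.2, hv⟩
  exact ⟨x, hx, fun h => (hmax _ h).not_gt (lt_add_one x)⟩

lemma totalDegLE1_closure_lines {S : Set (ι × ℤ)} {v : ι × ℤ} (hv : v ∈ S)
    (hnext : (v.1, v.2 + 1) ∉ S) :
    TotalDegLE1 (Substructure.closure Language.graph S) ⟨v, Substructure.subset_closure hv⟩ := by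
  refine totalDegLE1_of_forall_not_E (fun u hu => hnext ?_) fun u₁ u₂ h₁ h₂ => ?_
  · rw [E_substructure, lines_E] at hu
    exact hu ▸ (Substructure.mem_closure_iff_of_isRelational Language.graph S u).1 u.2
  · rw [E_substructure] at h₁ h₂
    exact Subtype.ext (lines_inDirPaths.1 _ _ _ h₁ h₂)

lemma closure_lines_realize_lowDegreeSentence {B : ℕ} {S : Set (Fin B × ℤ)} (hS : S.Finite)
    (hmeets : ∀ i, ∃ x, (i, x) ∈ S) :
    Substructure.closure Language.graph S ⊨ lowDegreeSentence B := by
  choose x hxS hx using fun i => exists_lines_top hS (hmeets i).choose_spec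
  exact (realize_lowDegreeSentence _).2 ⟨fun i => ⟨(i, x i), Substructure.subset_closure (hxS i)⟩,
    fun i j hij => congrArg Prod.fst (congrArg Subtype.val hij),
    fun i => totalDegLE1_closure_lines (hxS i) (hx i)⟩

end Lines

/-- For each `B ≥ 1`, the FO sentence `φ` asserting that there are at least `B` vertices of
total degree at most 1 belongs to `PSC(B)`, but for no `n ∈ ℕ` is `φ` equivalent over the
class 𝒞 of disjoint unions of oriented paths to the condition: there exist `a₁,…,a_B` such
that for all `b₁,…,b_n`, the substructure induced on `{a₁,…,a_B,b₁,…,b_n}` satisfies `φ`. -/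
theorem statement13 (B : ℕ) (hB : 1 ≤ B) :
    ∃ φ : Language.graph.Sentence,
      (∀ (M : Type) [Language.graph.Structure M] [Nonempty M],
          M ⊨ φ ↔ ∃ f : Fin B → M, Function.Injective f ∧ ∀ i, TotalDegLE1 M (f i)) ∧
      PSC φ B ∧
      ∀ n : ℕ,
        ¬ ∀ (M : Type) [Language.graph.Structure M] [Nonempty M], InDirPaths M →
            (M ⊨ φ ↔
              ∃ a : Fin B → M, ∀ b : Fin n → M,
                ↥(Substructure.closure Language.graph (Set.range a ∪ Set.range b)) ⊨ φ) := by
  refine ⟨lowDegreeSentence B, fun M _ _ => realize_lowDegreeSentence M,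
    psc_lowDegreeSentence B, fun n h => ?_⟩
  let := linesStructure (Fin B)
  have : Nonempty (Fin B × ℤ) := ⟨(⟨0, hB⟩, 0)⟩
  have hlines : (Fin B × ℤ) ⊨ lowDegreeSentence B :=
    (h _ lines_inDirPaths).2 ⟨fun i => (i, 0), fun b =>
      closure_lines_realize_lowDegreeSentence ((Set.finite_range _).union (Set.finite_range _))
        fun i => ⟨0, Or.inl ⟨i, rfl⟩⟩⟩
  obtain ⟨f, -, hf⟩ := (realize_lowDegreeSentence _).1 hlines
  exact lines_not_totalDegLE1 _ (hf ⟨0, hB⟩)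

end Stmt
end

section
/- Let 𝒞 be the class of undirected graphs that are finite disjoint unions of finite undirected paths. For B ∈ {0,1}, an FO sentence φ is in PSC(B) over 𝒞 if and only if there exists n ∈ ℕ such that φ is equivalent over 𝒞 to the condition: there exist elements a₁,…,a_B such that for all elements b₁,…,b_n, the substructure induced on {a₁,…,a_B,b₁,…,b_n} satisfies φ. -/
open FirstOrder Language

universe u v

namespace Stmt

variable {L : FirstOrder.Language.{u, v}}

/-- Membership in the class 𝒞 of undirected graphs that are finite disjoint unions of finite
undirected paths: the structure is finite, the edge relation is symmetric and irreflexive,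
every vertex has degree at most 2, and there is no (undirected) cycle, i.e. no injective
cyclically-ordered sequence of at least 3 vertices with consecutive edges. -/
def InUndirPaths (M : Type) [Language.graph.Structure M] : Prop :=
  Finite M ∧
  (∀ x y : M, E M x y → E M y x) ∧
  (∀ x : M, ¬ E M x x) ∧
  (∀ v u₁ u₂ u₃ : M, E M v u₁ → E M v u₂ → E M v u₃ → (u₁ = u₂ ∨ u₁ = u₃ ∨ u₂ = u₃)) ∧
  ∀ (m : ℕ) (f : Fin (m + 3) → M), Function.Injective f → ¬ ∀ i, E M (f i) (f (i + 1))

/-- `M` has at least `B` connected components: there are `B` vertices that are pairwise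
unreachable from one another. -/
def AtLeastComponents (M : Type) [Language.graph.Structure M] (B : ℕ) : Prop :=
  ∃ f : Fin B → M, ∀ i j : Fin B, i ≠ j → ¬ Relation.ReflTransGen (E M) (f i) (f j)

/-!
(⇐) 𝒞 is closed under substructures, so the witnesses `a₁,…,a_B` of the ∃∀-condition form a
core: every substructure containing them still satisfies the condition, hence `φ`.

(⇒) If no `n` works, then for every `n` some graph in 𝒞 with a marked `B`-tuple is a minimal
non-model of `φ` (every proper substructure containing the marks is a model) with more than `n`
vertices: a counterexample to the `n`-th equivalence satisfies the ∃∀-condition (by the cores, `φ`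
implies it) but not `φ`, and we shrink it. A graph in 𝒞 is a disjoint union of paths, so with at
most one mark it is described by the list of its path lengths, the marked path recording the
distances of the mark to its two ends. By Higman's lemma one of these minimal non-models embeds,
marks to marks, into a strictly larger later one; the image is a proper substructure containing
the marks, hence a model of `φ`, and so is the smaller graph — a contradiction.
-/

section Basics

variable {M N : Type} [Language.graph.Structure M] [Language.graph.Structure N]

lemma relMap_adj_iff (x : Fin 2 → M) :
    Structure.RelMap Language.adj x ↔ E M (x 0) (x 1) := by
  rw [← FinVec.etaExpand_eq x]
  rfl

@[simp]
lemma E_substructure_iff (S : Language.graph.Substructure M) (x y : S) : E S x y ↔ E M x y :=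
  relMap_adj_iff (M := M) _

def embeddingOfE (F : M → N) (hF : Function.Injective F)
    (hE : ∀ x y, E N (F x) (F y) ↔ E M x y) : M ↪[Language.graph] N where
  toFun := F
  inj' := hF
  map_fun' f := isEmptyElim f
  map_rel' r x := by
    cases r
    rw [relMap_adj_iff, relMap_adj_iff]
    exact hE _ _

lemma InUndirPaths.substructure (hM : InUndirPaths M) (S : Language.graph.Substructure M) :
    InUndirPaths S := by
  obtain ⟨hfin, hsym, hirr, hdeg, hacy⟩ := hM
  refine ⟨Subtype.finite, fun x y => ?_, fun x => ?_, fun v u₁ u₂ u₃ => ?_, fun m f hf => ?_⟩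
  · simpa only [E_substructure_iff] using hsym x y
  · simpa only [E_substructure_iff] using hirr x
  · simpa only [E_substructure_iff, Subtype.ext_iff] using hdeg v u₁ u₂ u₃
  · simpa only [E_substructure_iff] using
      hacy m (fun i => (f i : M)) (Subtype.val_injective.comp hf)

end Basics

section Chains

variable {M : Type} [Language.graph.Structure M] {m : ℕ} {h : ℕ → M}

structure IsChain (m : ℕ) (h : ℕ → M) : Prop where
  inj : ∀ {i j}, i ≤ m → j ≤ m → h i = h j → i = j
  adj : ∀ i < m, E M (h i) (h (i + 1))

lemma IsChain.lt_card [Finite M] (hc : IsChain m h) : m < Nat.card M := by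
  have := Nat.card_le_card_of_injective (fun i : Fin (m + 1) => h i)
    fun i j hij => Fin.ext (hc.inj (Nat.le_of_lt_succ i.2) (Nat.le_of_lt_succ j.2) hij)
  simpa using this

lemma IsChain.reverse (hsym : ∀ x y, E M x y → E M y x) (hc : IsChain m h) :
    IsChain m (fun i => h (m - i)) := by
  refine ⟨fun {i j} hi hj hij => ?_, fun i hi => ?_⟩
  · have := hc.inj (m.sub_le i) (m.sub_le j) hij
    omega
  · have := hsym _ _ (hc.adj (m - (i + 1)) (by omega))
    rwa [show m - (i + 1) + 1 = m - i by omega] at this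

lemma IsChain.snoc (hc : IsChain m h) {u : M} (hu : ∀ i ≤ m, h i ≠ u) (hE : E M (h m) u) :
    IsChain (m + 1) (fun i => if i ≤ m then h i else u) := by
  refine ⟨fun {i j} hi hj hij => ?_, fun i hi => ?_⟩
  · by_cases hi' : i ≤ m <;> by_cases hj' : j ≤ m <;> simp only [hi', hj', if_true, if_false] at hij
    · exact hc.inj hi' hj' hij
    · exact absurd hij (hu i hi')
    · exact absurd hij.symm (hu j hj')
    · omega
  · rcases Nat.lt_or_ge i m with him | him
    · simpa [him.le, Nat.succ_le_of_lt him] using hc.adj i him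
    · obtain rfl : i = m := by omega
      simpa using hE

lemma IsChain.eq_of_adj_last (hM : InUndirPaths M) (hc : IsChain m h) {j : ℕ} (hj : j ≤ m)
    (hE : E M (h m) (h j)) : j + 1 = m := by
  obtain ⟨-, -, hirr, -, hacy⟩ := hM
  have hjm : j ≠ m := by
    rintro rfl
    exact hirr _ hE
  by_contra hne
  obtain ⟨k, rfl⟩ : ∃ k, m = j + k + 2 := ⟨m - j - 2, by omega⟩
  refine hacy k (fun t => h (j + t)) (fun s t hst => Fin.ext ?_) fun t => ?_
  · have := hc.inj (by omega) (by omega) hst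
    omega
  · rw [Fin.val_add_one]
    split_ifs with ht
    · simpa [ht, add_assoc] using hE
    · have ht' : (t : ℕ) < k + 2 :=
        lt_of_le_of_ne (Nat.le_of_lt_succ t.2) fun h' => ht (Fin.ext h')
      rw [← add_assoc]
      exact hc.adj (j + t) (by omega)

lemma exists_isChain_adj_closed (hM : InUndirPaths M) (v : M) :
    ∃ m h, IsChain m h ∧ (∃ t ≤ m, h t = v) ∧
      ∀ i ≤ m, ∀ u, E M (h i) u → ∃ j ≤ m, u = h j ∧ (j + 1 = i ∨ i + 1 = j) := by
  classical
  have ⟨_, hsym, _, hdeg, _⟩ := hM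
  let P : ℕ → Prop := fun m => ∃ h, IsChain m h ∧ ∃ t ≤ m, h t = v
  have hP0 : P 0 := ⟨fun _ => v, ⟨fun hi hj _ => by omega, fun i hi => by omega⟩, 0, le_rfl, rfl⟩
  set m := Nat.findGreatest P (Nat.card M)
  obtain ⟨h, hc, t, ht, rfl⟩ : P m := Nat.findGreatest_spec (Nat.zero_le _) hP0
  have hmax : ¬ P (m + 1) := fun hP =>
    Nat.findGreatest_is_greatest (lt_add_one m) (hP.choose_spec.1.lt_card.le) hP
  have hlast : ∀ h', IsChain m h' → (∃ s ≤ m, h' s = h t) →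
      ∀ u, E M (h' m) u → ∃ j ≤ m, u = h' j ∧ j + 1 = m := by
    intro h' hc' ⟨t', ht', hvt'⟩ u hu
    by_cases hmem : ∃ j ≤ m, h' j = u
    · obtain ⟨j, hj, rfl⟩ := hmem
      exact ⟨j, hj, rfl, hc'.eq_of_adj_last hM hj hu⟩
    · push Not at hmem
      exact absurd ⟨_, hc'.snoc hmem hu, t', by omega, by simp [ht', hvt']⟩ hmax
  refine ⟨m, h, hc, ⟨t, ht, rfl⟩, fun i hi u hu => ?_⟩
  rcases eq_or_ne i m with rfl | him
  · obtain ⟨j, hj, rfl, hjm⟩ := hlast h hc ⟨t, ht, rfl⟩ u hu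
    exact ⟨j, hj, rfl, .inl hjm⟩
  rcases eq_or_ne i 0 with rfl | hi0
  · obtain ⟨j, hj, rfl, hjm⟩ := hlast _ (hc.reverse hsym)
      ⟨m - t, by omega, by simp [Nat.sub_sub_self ht]⟩ u (by simpa using hu)
    exact ⟨m - j, by omega, rfl, .inr (by omega)⟩
  -- an interior vertex already has its two chain neighbours, which use up its degree
  have hprev : E M (h i) (h (i - 1)) := by
    have := hsym _ _ (hc.adj (i - 1) (by omega))
    rwa [Nat.sub_add_cancel (Nat.one_le_iff_ne_zero.2 hi0)] at this
  rcases hdeg _ _ _ u hprev (hc.adj i (by omega)) hu with hprev_next | rfl | rfl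
  · have := hc.inj (by omega) (by omega) hprev_next
    omega
  · exact ⟨i - 1, by omega, rfl, .inl (by omega)⟩
  · exact ⟨i + 1, by omega, rfl, .inr rfl⟩

end Chains

section Decomposition

variable {M : Type} [Language.graph.Structure M]

structure IsPathDecomp {ι : Type*} (len : ι → ℕ) (vtx : ι → ℕ → M) : Prop where
  exists_eq : ∀ x, ∃ c, ∃ i ≤ len c, vtx c i = x
  inj : ∀ {c c' i i'}, i ≤ len c → i' ≤ len c' → vtx c i = vtx c' i' → c = c' ∧ i = i'
  adj_iff : ∀ {c c' i i'}, i ≤ len c → i' ≤ len c' →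
    (E M (vtx c i) (vtx c' i') ↔ c = c' ∧ (i + 1 = i' ∨ i' + 1 = i))

lemma IsChain.quot_mk_eq {m : ℕ} {h : ℕ → M} (hc : IsChain m h) {i j : ℕ} (hi : i ≤ m)
    (hj : j ≤ m) : Quot.mk (E M) (h i) = Quot.mk (E M) (h j) := by
  suffices ∀ i ≤ m, Quot.mk (E M) (h i) = Quot.mk (E M) (h 0) from
    (this i hi).trans (this j hj).symm
  intro i hi
  induction i with
  | zero => rfl
  | succ i ih => exact (Quot.sound (hc.adj i hi)).symm.trans (ih (by omega))

lemma iff_of_eqvGen_of_adj_closed (hsym : ∀ x y, E M x y → E M y x) {S : Set M}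
    (hS : ∀ x ∈ S, ∀ y, E M x y → y ∈ S) {x y : M} (hxy : Relation.EqvGen (E M) x y) :
    x ∈ S ↔ y ∈ S := by
  induction hxy with
  | rel x y h => exact ⟨fun hx => hS x hx y h, fun hy => hS y hy x (hsym _ _ h)⟩
  | refl => rfl
  | symm _ _ _ ih => exact ih.symm
  | trans _ _ _ _ _ ih ih' => exact ih.trans ih'

/-- `Quot (E M)` is the type of connected components; each one is enumerated by a longest chain
through its representative. -/
theorem exists_isPathDecomp (hM : InUndirPaths M) :
    ∃ (len : Quot (E M) → ℕ) (vtx : Quot (E M) → ℕ → M), IsPathDecomp len vtx := by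
  have hsym := hM.2.1
  choose len vtx hc hout hclosed using fun c : Quot (E M) => exists_isChain_adj_closed hM c.out
  have hmk : ∀ c, ∀ i ≤ len c, Quot.mk _ (vtx c i) = c := by
    intro c i hi
    obtain ⟨t, ht, hvt⟩ := hout c
    rw [(hc c).quot_mk_eq hi ht, hvt, Quot.out_eq]
  refine ⟨len, vtx, ⟨fun x => ?_, fun {c c' i i'} hi hi' heq => ?_, fun {c c' i i'} hi hi' => ?_⟩⟩
  · let c := Quot.mk (E M) x
    let S := {y | ∃ i ≤ len c, vtx c i = y}
    have hS : ∀ y ∈ S, ∀ z, E M y z → z ∈ S := by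
      rintro _ ⟨i, hi, rfl⟩ z hz
      obtain ⟨j, hj, rfl, -⟩ := hclosed c i hi z hz
      exact ⟨j, hj, rfl⟩
    exact ⟨c, (iff_of_eqvGen_of_adj_closed hsym hS
      (Quot.eqvGen_exact (Quot.out_eq c))).1 (hout c)⟩
  · obtain rfl : c = c' := (hmk c i hi).symm.trans ((congrArg _ heq).trans (hmk c' i' hi'))
    exact ⟨rfl, (hc c).inj hi hi' heq⟩
  · constructor
    · intro hE
      obtain rfl : c = c' := (hmk c i hi).symm.trans ((Quot.sound hE).trans (hmk c' i' hi'))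
      obtain ⟨j, hj, hji, hadj⟩ := hclosed c i hi _ hE
      obtain rfl := (hc c).inj hi' hj hji
      exact ⟨rfl, hadj.symm⟩
    · rintro ⟨rfl, rfl | rfl⟩
      · exact (hc c).adj i (by omega)
      · exact hsym _ _ ((hc c).adj i' (by omega))

end Decomposition

section Embedding

variable {M N : Type} [Language.graph.Structure M] [Language.graph.Structure N]
  {ι ι' : Type*} {len : ι → ℕ} {vtx : ι → ℕ → M} {len' : ι' → ℕ} {vtx' : ι' → ℕ → N}

theorem IsPathDecomp.exists_embedding (hd : IsPathDecomp len vtx)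
    (hd' : IsPathDecomp len' vtx') {σ : ι → ι'} (hσ : Function.Injective σ) (s : ι → ℕ)
    (hs : ∀ c, ∀ i ≤ len c, i + s c ≤ len' (σ c)) :
    ∃ F : M ↪[Language.graph] N, ∀ c, ∀ i ≤ len c, F (vtx c i) = vtx' (σ c) (i + s c) := by
  choose cx ix hix hvx using hd.exists_eq
  let F x := vtx' (σ (cx x)) (ix x + s (cx x))
  have hF : ∀ c, ∀ i ≤ len c, F (vtx c i) = vtx' (σ c) (i + s c) := by
    intro c i hi
    obtain ⟨hc, hi'⟩ := hd.inj (hix _) hi (hvx (vtx c i))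
    simp only [F, hc, hi']
  refine ⟨embeddingOfE F (fun x y hxy => ?_) (fun x y => ?_), hF⟩
  · obtain ⟨c, i, hi, rfl⟩ := hd.exists_eq x
    obtain ⟨c', i', hi', rfl⟩ := hd.exists_eq y
    rw [hF c i hi, hF c' i' hi'] at hxy
    obtain ⟨hσc, hii⟩ := hd'.inj (hs c i hi) (hs c' i' hi') hxy
    obtain rfl := hσ hσc
    rw [show i = i' by omega]
  · obtain ⟨c, i, hi, rfl⟩ := hd.exists_eq x
    obtain ⟨c', i', hi', rfl⟩ := hd.exists_eq y
    rw [hF c i hi, hF c' i' hi', hd'.adj_iff (hs c i hi) (hs c' i' hi'), hd.adj_iff hi hi',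
      hσ.eq_iff]
    constructor <;> rintro ⟨rfl, h⟩ <;> exact ⟨rfl, by omega⟩

end Embedding

section MarkedCode

variable {M N : Type} {ι ι' : Type*} {len : ι → ℕ}
  {vtx : ι → ℕ → M} {len' : ι' → ℕ} {vtx' : ι' → ℕ → N} {B : ℕ}

/-- A path without mark is coded by `inl ℓ`, its length; a path whose mark sits at distance `p`
and `q` from its two ends is coded by `inr (p, q)`. For the componentwise orders, one code lies
below another exactly when the first marked path embeds into the second. -/
def IsMarkedCode (a : Fin B → M) (len : ι → ℕ) (vtx : ι → ℕ → M)
    (code : ι → ℕ ⊕ ℕ × ℕ) : Prop :=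
  ∀ c, (code c = .inl (len c) ∧ ∀ t, ∀ i ≤ len c, a t ≠ vtx c i) ∨
    ∃ t, ∃ p ≤ len c, a t = vtx c p ∧ code c = .inr (p, len c - p)

lemma exists_isMarkedCode (a : Fin B → M) (len : ι → ℕ) (vtx : ι → ℕ → M) :
    ∃ code, IsMarkedCode a len vtx code := by
  classical
  refine ⟨fun c => if h : ∃ t, ∃ p ≤ len c, a t = vtx c p then
    .inr (h.choose_spec.choose, len c - h.choose_spec.choose) else .inl (len c), fun c => ?_⟩
  by_cases h : ∃ t, ∃ p ≤ len c, a t = vtx c p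
  · obtain ⟨hp, hat⟩ := h.choose_spec.choose_spec
    exact .inr ⟨_, _, hp, hat, dif_pos h⟩
  · exact .inl ⟨dif_neg h, fun t i hi hat => h ⟨t, i, hi, hat⟩⟩

lemma IsMarkedCode.exists_offset [Language.graph.Structure M] [Subsingleton (Fin B)]
    {a : Fin B → M} {a' : Fin B → N}
    {code : ι → ℕ ⊕ ℕ × ℕ} {code' : ι' → ℕ ⊕ ℕ × ℕ} (hcode : IsMarkedCode a len vtx code)
    (hd : IsPathDecomp len vtx) (hcode' : IsMarkedCode a' len' vtx' code') {c : ι} {c' : ι'}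
    (hle : code c ≤ code' c') :
    ∃ s, (∀ i ≤ len c, i + s ≤ len' c') ∧
      ∀ t, ∀ p ≤ len c, a t = vtx c p → a' t = vtx' c' (p + s) := by
  rcases hcode c with ⟨hc, hnot⟩ | ⟨t, p, hp, hat, hc⟩ <;>
    rcases hcode' c' with ⟨hc', -⟩ | ⟨t', p', hp', hat', hc'⟩ <;> rw [hc, hc'] at hle
  · have := Sum.inl_le_inl_iff.1 hle
    exact ⟨0, fun i hi => by omega, fun t p hp hat => absurd hat (hnot t p hp)⟩
  · exact absurd hle Sum.not_inl_le_inr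
  · exact absurd hle Sum.not_inr_le_inl
  · obtain ⟨hpp, hqq⟩ := Prod.mk_le_mk.1 (Sum.inr_le_inr_iff.1 hle)
    refine ⟨p' - p, fun i hi => by omega, fun t₀ p₀ hp₀ hat₀ => ?_⟩
    rw [Subsingleton.elim t₀ t] at hat₀ ⊢
    obtain rfl := (hd.inj hp₀ hp (hat₀.symm.trans hat)).2
    rw [Subsingleton.elim t t', hat', Nat.add_sub_cancel' hpp]

end MarkedCode

section WellQuasiOrder

instance Sum.wellQuasiOrderedLE {α β : Type*} [Preorder α] [Preorder β] [WellQuasiOrderedLE α]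
    [WellQuasiOrderedLE β] : WellQuasiOrderedLE (α ⊕ β) := by
  rw [← Set.isPWO_univ_iff, ← Set.range_inl_union_range_inr, ← Set.image_univ, ← Set.image_univ]
  exact ((Set.isPWO_univ_iff.2 ‹_›).image_of_monotone fun _ _ => Sum.inl_le_inl_iff.2).union
    ((Set.isPWO_univ_iff.2 ‹_›).image_of_monotone fun _ _ => Sum.inr_le_inr_iff.2)

lemma exists_embedding_of_sublistForall₂ {α β : Type*} {R : α → β → Prop} {l₁ : List α}
    {l₂ : List β} (h : List.SublistForall₂ R l₁ l₂) :
    ∃ g : Fin l₁.length ↪ Fin l₂.length, ∀ i, R l₁[i] l₂[g i] := by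
  obtain ⟨l, hR, hl⟩ := List.sublistForall₂_iff.1 h
  obtain ⟨g, hg⟩ := List.sublist_iff_exists_fin_orderEmbedding_get_eq.1 hl
  obtain ⟨hlen, hR⟩ := List.forall₂_iff_get.1 hR
  refine ⟨(Fin.castOrderIso hlen).toEquiv.toEmbedding.trans g.toEmbedding, fun i => ?_⟩
  have := hR i i.2 (hlen ▸ i.2)
  simp only [List.get_eq_getElem] at this hg
  simpa [← hg] using this

theorem exists_lt_injective_le {α : Type*} [Preorder α] [WellQuasiOrderedLE α]
    {ι : ℕ → Type*} [∀ k, Finite (ι k)] (f : ∀ k, ι k → α) :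
    ∃ k k', k < k' ∧ ∃ σ : ι k → ι k', Function.Injective σ ∧ ∀ c, f k c ≤ f k' (σ c) := by
  let e k := Finite.equivFin (ι k)
  let l k := List.ofFn (f k ∘ (e k).symm)
  obtain ⟨k, k', hkk, hl⟩ := ((Set.isPWO_univ_iff.2 ‹_›).partiallyWellOrderedOn_sublistForall₂
    (· ≤ ·)).exists_lt (f := l) fun _ _ _ => Set.mem_univ _
  obtain ⟨g, hg⟩ := exists_embedding_of_sublistForall₂ hl
  have hlen : ∀ k, (l k).length = Nat.card (ι k) := fun k => List.length_ofFn
  let σ c := (e k').symm (Fin.cast (hlen k') (g (Fin.cast (hlen k).symm (e k c))))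
  refine ⟨k, k', hkk, σ, (e k').symm.injective.comp <| (Fin.cast_injective _).comp <|
    g.injective.comp <| (Fin.cast_injective _).comp (e k).injective, fun c => ?_⟩
  have := hg (Fin.cast (hlen k).symm (e k c))
  simp only [l, Fin.getElem_fin, List.getElem_ofFn, Function.comp_apply, Fin.val_cast,
    Fin.eta, Equiv.symm_apply_apply] at this
  exact this

theorem exists_lt_markedEmbedding {B : ℕ} (hB : B ≤ 1) {P : ℕ → Type}
    [∀ k, Language.graph.Structure (P k)] (hP : ∀ k, InUndirPaths (P k)) (a : ∀ k, Fin B → P k) :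
    ∃ k k', k < k' ∧ ∃ F : P k ↪[Language.graph] P k', ∀ t, F (a k t) = a k' t := by
  have : Subsingleton (Fin B) := Fin.subsingleton_iff_le_one.2 hB
  have (k : ℕ) : Finite (P k) := (hP k).1
  choose len vtx hd using fun k => exists_isPathDecomp (hP k)
  choose code hcode using fun k => exists_isMarkedCode (a k) (len k) (vtx k)
  obtain ⟨k, k', hkk, σ, hσ, hle⟩ := exists_lt_injective_le code
  choose s hs hmark using fun c => (hcode k).exists_offset (hd k) (hcode k') (hle c)
  obtain ⟨F, hF⟩ := (hd k).exists_embedding (hd k') hσ s hs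
  refine ⟨k, k', hkk, F, fun t => ?_⟩
  obtain ⟨c, p, hp, hat⟩ := (hd k).exists_eq (a k t)
  rw [← hat, hF c p hp, ← hmark c t p hp hat.symm]

end WellQuasiOrder

section MinimalNonModel

variable {M : Type} [Language.graph.Structure M] {φ : Language.graph.Sentence} {B n : ℕ}

def PSCOnPaths (φ : Language.graph.Sentence) (B : ℕ) : Prop :=
  ∀ (M : Type) [Language.graph.Structure M] [Nonempty M], InUndirPaths M → M ⊨ φ →
    ∃ C : Finset M, C.card ≤ B ∧ IsCore φ M ↑C

def ExistsForallSat (φ : Language.graph.Sentence) (B n : ℕ) (M : Type)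
    [Language.graph.Structure M] : Prop :=
  ∃ a : Fin B → M, ∀ b : Fin n → M,
    ↥(Substructure.closure Language.graph (Set.range a ∪ Set.range b)) ⊨ φ

def EquivExistsForallOnPaths (φ : Language.graph.Sentence) (B n : ℕ) : Prop :=
  ∀ (M : Type) [Language.graph.Structure M] [Nonempty M], InUndirPaths M →
    (M ⊨ φ ↔ ExistsForallSat φ B n M)

def IsMinimalNonModel (φ : Language.graph.Sentence) (P : Type) [Language.graph.Structure P]
    (a : Fin B → P) : Prop :=
  ¬ P ⊨ φ ∧ ∀ Q : Language.graph.Substructure P, Q ≠ ⊤ → (∀ t, a t ∈ Q) → Nonempty Q → ↥Q ⊨ φ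

lemma exists_fin_range_eq {α : Type*} {s : Set α} (hs : s.Finite) (hne : s.Nonempty) {n : ℕ}
    (hn : s.ncard ≤ n) : ∃ b : Fin n → α, Set.range b = s := by
  obtain ⟨k, f, rfl⟩ := hs.fin_embedding
  rw [Set.ncard_range_of_injective f.injective, Nat.card_eq_fintype_card, Fintype.card_fin] at hn
  have hk : 0 < k := by
    obtain ⟨_, i, -⟩ := hne
    exact i.pos
  refine ⟨fun j => f ⟨min j (k - 1), by omega⟩, subset_antisymm ?_ ?_⟩
  · rintro _ ⟨j, rfl⟩
    exact ⟨_, rfl⟩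
  · rintro _ ⟨i, rfl⟩
    exact ⟨⟨i, by omega⟩, by simp only [show min (i : ℕ) (k - 1) = i by omega]⟩

lemma existsForallSat_of_isCore [Nonempty M] {C : Finset M} (hC : IsCore φ M C)
    (hcard : C.card ≤ B) (n : ℕ) : ExistsForallSat φ B (n + 1) M := by
  obtain ⟨a, ha⟩ : ∃ a : Fin B → M, (C : Set M) ⊆ Set.range a := by
    rcases C.eq_empty_or_nonempty with rfl | hne
    · exact ⟨fun _ => Classical.arbitrary M, by simp⟩
    · obtain ⟨a, ha⟩ :=
        exists_fin_range_eq C.finite_toSet hne (n := B) (by rwa [Set.ncard_coe_finset])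
      exact ⟨a, ha.ge⟩
  exact ⟨a, fun b => hC _ (ha.trans (Set.subset_union_left.trans Substructure.subset_closure))
    ⟨⟨b 0, Substructure.subset_closure (Set.mem_union_right _ ⟨0, rfl⟩)⟩⟩⟩

lemma exists_isMinimalNonModel_substructure [Finite M] [Nonempty M] (a : Fin B → M)
    (hφ : ¬ M ⊨ φ) :
    ∃ (N : Language.graph.Substructure M) (ha : ∀ t, a t ∈ N),
      Nonempty N ∧ IsMinimalNonModel φ N fun t => ⟨a t, ha t⟩ := by
  let S := {N : Language.graph.Substructure M | Nonempty N ∧ (∀ t, a t ∈ N) ∧ ¬ N ⊨ φ}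
  have htop : ⊤ ∈ S := ⟨⟨⟨Classical.arbitrary M, Substructure.mem_top _⟩⟩,
    fun t => Substructure.mem_top _,
    (StrongHomClass.realize_sentence Substructure.topEquiv φ).not.2 hφ⟩
  obtain ⟨N, ⟨hne, ha, hNφ⟩, hmin⟩ :=
    (measure fun N : Language.graph.Substructure M => Nat.card N).wf.has_min S ⟨⊤, htop⟩
  refine ⟨N, ha, hne, hNφ, fun Q hQ hQa hQne => ?_⟩
  let e := N.subtype.substructureEquivMap Q
  by_contra hQφ
  refine hmin (Q.map N.subtype.toHom)
    ⟨hQne.map e, fun t => Substructure.mem_map.2 ⟨⟨a t, ha t⟩, hQa t, rfl⟩,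
      (StrongHomClass.realize_sentence e φ).not.1 hQφ⟩ ?_
  obtain ⟨x, hx⟩ := SetLike.exists_not_mem_of_ne_top Q hQ
  exact (Nat.card_congr e.toEquiv).symm.trans_lt (Finite.card_subtype_lt hx)

lemma lt_card_of_forall_realize_closure [Finite M] {a : Fin B → M}
    (hb : ∀ b : Fin n → M,
      ↥(Substructure.closure Language.graph (Set.range a ∪ Set.range b)) ⊨ φ)
    {N : Language.graph.Substructure M} (hne : Nonempty N) (ha : ∀ t, a t ∈ N)
    (hφ : ¬ N ⊨ φ) : n < Nat.card N := by
  by_contra hle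
  obtain ⟨b, hbN⟩ := exists_fin_range_eq (Set.toFinite (N : Set M))
    (Set.nonempty_coe_sort.1 hne) (n := n) (by rw [← Nat.card_coe_set_eq]; exact not_lt.1 hle)
  have := hb b
  rw [hbN, Set.union_eq_right.2 (Set.range_subset_iff.2 ha), Substructure.closure_eq] at this
  exact hφ this

lemma PSCOnPaths.exists_isMinimalNonModel (hpsc : PSCOnPaths φ B) [Nonempty M]
    (hM : InUndirPaths M) (h : ¬ (M ⊨ φ ↔ ExistsForallSat φ B (n + 1) M)) :
    ∃ (P : Type) (_ : Language.graph.Structure P) (a : Fin B → P),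
      InUndirPaths P ∧ Nonempty P ∧ n < Nat.card P ∧ IsMinimalNonModel φ P a := by
  have := hM.1
  have hsat : M ⊨ φ → ExistsForallSat φ B (n + 1) M := fun hφ =>
    let ⟨_, hC, hcore⟩ := hpsc M hM hφ
    existsForallSat_of_isCore hcore hC n
  obtain ⟨hφ, a, hb⟩ : ¬ M ⊨ φ ∧ ExistsForallSat φ B (n + 1) M := by tauto
  obtain ⟨N, ha, hne, hmin⟩ := exists_isMinimalNonModel_substructure a hφ
  exact ⟨N, inferInstance, _, hM.substructure N, hne,
    (lt_card_of_forall_realize_closure hb hne ha hmin.1).trans' (Nat.lt_succ_self n), hmin⟩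

lemma IsMinimalNonModel.not_embedding {P Q : Type} [Language.graph.Structure P]
    [Language.graph.Structure Q] [Nonempty P] {a : Fin B → P} {a' : Fin B → Q}
    (hQ : IsMinimalNonModel φ Q a') (hP : ¬ P ⊨ φ) (F : P ↪[Language.graph] Q)
    (hF : ∀ t, F (a t) = a' t) (hcard : Nat.card P < Nat.card Q) : False := by
  have hS : F.toHom.range ≠ ⊤ := by
    intro hS
    have := (Nat.card_congr F.equivRange.toEquiv).trans
      (hS ▸ Nat.card_congr Substructure.topEquiv.toEquiv)
    omega
  exact hP ((StrongHomClass.realize_sentence F.equivRange φ).2 (hQ.2 _ hS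
    (fun t => hF t ▸ F.toHom.mem_range_self _)
    ⟨⟨F (Classical.arbitrary P), F.toHom.mem_range_self _⟩⟩))

end MinimalNonModel

section Characterization

variable {φ : Language.graph.Sentence} {B : ℕ}

theorem EquivExistsForallOnPaths.pscOnPaths {n : ℕ} (H : EquivExistsForallOnPaths φ B n) :
    PSCOnPaths φ B := by
  classical
  intro M _ _ hM hφ
  obtain ⟨a, ha⟩ := (H M hM).1 hφ
  refine ⟨Finset.univ.image a, Finset.card_image_le.trans (by simp), fun N hCN _ => ?_⟩
  have haN : ∀ t, a t ∈ N := fun t => hCN (by simp)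
  refine (H N (hM.substructure N)).2 ⟨fun t => ⟨a t, haN t⟩, fun b => ?_⟩
  have hmap := Substructure.map_closure N.subtype.toHom
    (Set.range (fun t => (⟨a t, haN t⟩ : N)) ∪ Set.range b)
  rw [Set.image_union, ← Set.range_comp, ← Set.range_comp] at hmap
  exact (StrongHomClass.realize_sentence (N.subtype.substructureEquivMap _) φ).2
    (hmap ▸ ha (Subtype.val ∘ b))

theorem PSCOnPaths.exists_equivExistsForallOnPaths (hB : B ≤ 1) (hpsc : PSCOnPaths φ B) :
    ∃ n, EquivExistsForallOnPaths φ B n := by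
  by_contra hno
  have hbad : ∀ n, ∃ (P : Type) (_ : Language.graph.Structure P) (a : Fin B → P),
      InUndirPaths P ∧ Nonempty P ∧ n < Nat.card P ∧ IsMinimalNonModel φ P a := by
    intro n
    by_contra hgood
    refine hno ⟨n + 1, fun M _ _ hM => ?_⟩
    by_contra h
    exact hgood (hpsc.exists_isMinimalNonModel hM h)
  choose P _ a hP _ hcard hmin using hbad
  -- `f (k + 1) = Nat.card (P (f k))`, so the sizes along `f` increase strictly
  let f : ℕ → ℕ := fun k => Nat.rec 0 (fun _ m => Nat.card (P m)) k
  have hf : StrictMono fun k => Nat.card (P (f k)) :=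
    strictMono_nat_of_lt_succ fun k => hcard (f (k + 1))
  obtain ⟨k, k', hkk, F, hF⟩ := exists_lt_markedEmbedding hB (fun k => hP (f k)) (fun k => a (f k))
  exact (hmin (f k')).not_embedding (hmin (f k)).1 F hF (hf hkk)

end Characterization

/-- Over the class 𝒞 of finite disjoint unions of finite undirected paths: for `B ∈ {0,1}`,
an FO sentence `φ` is in `PSC(B)` over 𝒞 iff there exists `n ∈ ℕ` such that `φ` is
equivalent over 𝒞 to the condition: there exist elements `a₁,…,a_B` such that for all
elements `b₁,…,b_n`, the substructure induced on `{a₁,…,a_B,b₁,…,b_n}` satisfies `φ`. -/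
theorem statement17 (B : ℕ) (hB : B ≤ 1) (φ : Language.graph.Sentence) :
    (∀ (M : Type) [Language.graph.Structure M] [Nonempty M], InUndirPaths M → M ⊨ φ →
        ∃ C : Finset M, C.card ≤ B ∧ IsCore φ M ↑C) ↔
      ∃ n : ℕ, ∀ (M : Type) [Language.graph.Structure M] [Nonempty M], InUndirPaths M →
        (M ⊨ φ ↔
          ∃ a : Fin B → M, ∀ b : Fin n → M,
            ↥(Substructure.closure Language.graph (Set.range a ∪ Set.range b)) ⊨ φ) :=
  ⟨PSCOnPaths.exists_equivExistsForallOnPaths hB,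
    fun ⟨_, H⟩ => EquivExistsForallOnPaths.pscOnPaths H⟩

end Stmt
end
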